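/- arXiv:1802.06483 — 6 statements merged into one kernel-verified Lean document; each statement's English description precedes it below -/
import Mathlib

section
/- A committee scoring rule is non-crossing monotone if and only if it is weakly separable. In particular, if shifting any member c of any winning committee W forward by one position in any vote—without c passing another member of W—always keeps W winning, then the scoring functions f_{m,k} can be written as f_{m,k}(i_1,...,i_k) = Σ_{t=1}^k γ_{m,k}(i_t) for some nonincreasing single-winner scoring functions γ_{m,k}. -/
open Finset

/-- A committee (or a committee position) of size `k` among `m` candidates:
positions are 0-indexed elements of `Fin m`. -/
abbrev Committee (m k : ℕ) := {A : Finset (Fin m) // A.card = k}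

/-- The committee position of committee `S` in a vote `v` (a vote assigns to each
candidate its position, position `0` being the best). -/
def commPos {m k : ℕ} (v : Equiv.Perm (Fin m)) (S : Committee m k) : Committee m k :=
  ⟨S.1.image v, by rw [Finset.card_image_of_injective _ v.injective]; exact S.2⟩

/-- An election: a number of voters, each voter a ranking given as the map
candidate ↦ position. -/
structure Election (m : ℕ) where
  n : ℕ
  vote : Fin n → Equiv.Perm (Fin m)

/-- The score of committee `S` under committee scoring function `f`. -/
def score {m k : ℕ} (f : Committee m k → ℝ) (E : Election m) (S : Committee m k) : ℝ :=
  ∑ i : Fin E.n, f (commPos (E.vote i) S)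

/-- The winning committees. -/
def winners {m k : ℕ} (f : Committee m k → ℝ) (E : Election m) : Set (Committee m k) :=
  {S | ∀ T, score f E T ≤ score f E S}

/-- `A` weakly dominates `B`: the sorted position sequences compare pointwise. -/
def Dominates {m : ℕ} (A B : Finset (Fin m)) : Prop :=
  List.Forall₂ (· ≤ ·) (A.sort (· ≤ ·)) (B.sort (· ≤ ·))

/-- A committee scoring function: nonnegative and monotone w.r.t. dominance. -/
structure IsCSF {m k : ℕ} (f : Committee m k → ℝ) : Prop where
  nonneg : ∀ S, 0 ≤ f S
  mono : ∀ A B : Committee m k, Dominates A.1 B.1 → f B ≤ f A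

/-- The `t`-th smallest position in a committee position. -/
def posAt {m k : ℕ} (S : Committee m k) (t : Fin k) : Fin m :=
  (S.1.orderIsoOfFin S.2 t).1

/-- A single-winner scoring function: nonincreasing and nonnegative. -/
def IsSWSF {m : ℕ} (γ : Fin m → ℝ) : Prop :=
  Antitone γ ∧ ∀ i, 0 ≤ γ i

/-- Two families of committee scoring functions define the same multiwinner rule. -/
def SameRule (f g : ∀ m k, Committee m k → ℝ) : Prop :=
  ∀ (m k : ℕ) (E : Election m), winners (f m k) E = winners (g m k) E

/-- `f` is a positive affine transformation of `g`. -/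
def AffEquiv {m k : ℕ} (f g : Committee m k → ℝ) : Prop :=
  ∃ a b : ℝ, 0 < a ∧ ∀ S, f S = a * g S + b

def WeaklySeparable {m k : ℕ} (f : Committee m k → ℝ) : Prop :=
  ∃ γ : Fin m → ℝ, IsSWSF γ ∧ ∀ S : Committee m k, f S = ∑ i ∈ S.1, γ i

def RepFocused {m k : ℕ} (f : Committee m k → ℝ) : Prop :=
  ∃ γ : Fin m → ℝ, IsSWSF γ ∧ ∀ (S : Committee m k) (h : 0 < k), f S = γ (posAt S ⟨0, h⟩)

def TopKCounting {m k : ℕ} (f : Committee m k → ℝ) : Prop :=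
  ∃ g : ℕ → ℝ, (∀ i j, i ≤ j → j ≤ k → g i ≤ g j) ∧ (∀ i, 0 ≤ g i) ∧
    ∀ S : Committee m k, f S = g ((S.1.filter (fun p : Fin m => (p : ℕ) < k)).card)

def OWABased {m k : ℕ} (f : Committee m k → ℝ) : Prop :=
  ∃ (lam : Fin k → ℝ) (γ : Fin m → ℝ), (∀ t, 0 ≤ lam t) ∧ IsSWSF γ ∧
    ∀ S : Committee m k, f S = ∑ t : Fin k, lam t * γ (posAt S t)

def Decomposable {m k : ℕ} (f : Committee m k → ℝ) : Prop :=
  ∃ γ : Fin k → Fin m → ℝ, (∀ t, IsSWSF (γ t)) ∧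
    ∀ S : Committee m k, f S = ∑ t : Fin k, γ t (posAt S t)

/-- Replace the vote of voter `i₀` by `v'`. -/
def replaceVote {m : ℕ} (E : Election m) (i₀ : Fin E.n) (v' : Equiv.Perm (Fin m)) : Election m :=
  ⟨E.n, Function.update E.vote i₀ v'⟩

/-- The `t` highest-ranked (in vote `v`) members of committee `W`. -/
def topMembers {m k : ℕ} (v : Equiv.Perm (Fin m)) (W : Committee m k) (t : ℕ) : Finset (Fin m) :=
  W.1.filter (fun c => (W.1.filter (fun d => v d ≤ v c)).card ≤ t)

/-- `v'` is obtained from `v` by shifting every member of `T` forward by one position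
(candidates outside `T` keep their position or are pushed down by one). -/
def IsPrefixShift {m : ℕ} (v v' : Equiv.Perm (Fin m)) (T : Finset (Fin m)) : Prop :=
  (∀ c ∈ T, (v' c : ℕ) + 1 = (v c : ℕ)) ∧
  (∀ d, d ∉ T → (v' d : ℕ) = (v d : ℕ) ∨ (v' d : ℕ) = (v d : ℕ) + 1)

/-- `t`-prefix monotonicity of the rule defined by the family `f`. -/
def PrefixMonoT (f : ∀ m k, Committee m k → ℝ) (t : ℕ) : Prop :=
  ∀ (m k : ℕ) (E : Election m) (W : Committee m k), W ∈ winners (f m k) E →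
    ∀ (i₀ : Fin E.n) (v' : Equiv.Perm (Fin m)),
      IsPrefixShift (E.vote i₀) v' (topMembers (E.vote i₀) W t) →
      W ∈ winners (f m k) (replaceVote E i₀ v')

/-- Non-crossing monotonicity: shifting a member `c` of a winning committee `W`
forward by one position in one vote, without passing another member of `W`,
keeps `W` winning. -/
def NonCrossingMono (f : ∀ m k, Committee m k → ℝ) : Prop :=
  ∀ (m k : ℕ) (E : Election m) (W : Committee m k), W ∈ winners (f m k) E →
    ∀ (i₀ : Fin E.n) (c q : Fin m), c ∈ W.1 → (q : ℕ) + 1 = (E.vote i₀ c : ℕ) →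
      (E.vote i₀).symm q ∉ W.1 →
      W ∈ winners (f m k) (replaceVote E i₀ ((E.vote i₀).trans (Equiv.swap (E.vote i₀ c) q)))

/-- Narrow-top consistency. -/
def NarrowTopConsistent (f : ∀ m k, Committee m k → ℝ) : Prop :=
  ∀ (m k : ℕ) (E : Election m) (S : Finset (Fin m)), S.card ≤ k →
    (∀ i : Fin E.n, ∃ c ∈ S, (E.vote i c : ℕ) = 0) →
    (∀ c ∈ S, ∃ i : Fin E.n, (E.vote i c : ℕ) = 0) →
    ∀ W : Committee m k, W ∈ winners (f m k) E → S ⊆ W.1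

def NonConstant {m k : ℕ} (f : Committee m k → ℝ) : Prop :=
  ∃ S T : Committee m k, f S ≠ f T

def NonDegenerate (f : ∀ m k, Committee m k → ℝ) : Prop :=
  ∀ m k, 0 < k → k < m → NonConstant (f m k)

/-- Committee-enlargement monotonicity. -/
def CEM (f : ∀ m k, Committee m k → ℝ) : Prop :=
  ∀ (m k : ℕ) (E : Election m), k + 1 ≤ m →
    (∀ W : Committee m k, W ∈ winners (f m k) E →
      ∃ W' : Committee m (k + 1), W' ∈ winners (f m (k + 1)) E ∧ W.1 ⊆ W'.1) ∧
    (∀ W' : Committee m (k + 1), W' ∈ winners (f m (k + 1)) E →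
      ∃ W : Committee m k, W ∈ winners (f m k) E ∧ W.1 ⊆ W'.1)

/-- The SNTV committee scoring function: one point iff the committee contains
the voter's top candidate. -/
noncomputable def sntvF (m k : ℕ) (S : Committee m k) : ℝ :=
  ((S.1.filter (fun p : Fin m => (p : ℕ) = 0)).card : ℝ)

/-- The Bloc committee scoring function: the number of committee members among
the top `k` positions. -/
noncomputable def blocF (m k : ℕ) (S : Committee m k) : ℝ :=
  ((S.1.filter (fun p : Fin m => (p : ℕ) < k)).card : ℝ)

/-- The `k`-Approval Chamberlin–Courant scoring function: one point iff some
committee member is among the top `k` positions. -/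
noncomputable def ccF (m k : ℕ) (S : Committee m k) : ℝ :=
  if (S.1.filter (fun p : Fin m => (p : ℕ) < k)).card = 0 then 0 else 1

/-- The rule defined by `f` is weakly separable (as a rule). -/
def WeaklySeparableRule (f : ∀ m k, Committee m k → ℝ) : Prop :=
  ∃ g : ∀ m k, Committee m k → ℝ,
    (∀ m k, IsCSF (g m k)) ∧ (∀ m k, WeaklySeparable (g m k)) ∧ SameRule f g

/-! ### Auxiliary material for the proof -/

namespace NCMProof

open Equiv

variable {m k : ℕ}

/-- predecessor on `Fin m` (clamped at 0). -/
def finPred (j : Fin m) : Fin m := ⟨j.1 - 1, lt_of_le_of_lt (Nat.sub_le _ _) j.2⟩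

lemma finPred_val (j : Fin m) : (finPred j : ℕ) = (j : ℕ) - 1 := rfl

lemma finPred_ne (j : Fin m) (hj : 1 ≤ (j : ℕ)) : finPred j ≠ j := by
  intro h
  have := congrArg Fin.val h
  rw [finPred_val] at this
  omega

lemma committee_eq_of_degenerate (h : ¬(0 < k ∧ k < m)) (S T : Committee m k) : S = T := by
  apply Subtype.ext
  rcases Nat.eq_zero_or_pos k with hk | hk
  · have hS : S.1.card = 0 := by rw [S.2, hk]
    have hT : T.1.card = 0 := by rw [T.2, hk]
    rw [Finset.card_eq_zero.1 hS, Finset.card_eq_zero.1 hT]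
  · have hkm : m ≤ k := by
      by_contra hc; exact h ⟨hk, by omega⟩
    have h1 : k ≤ m := by
      have := Finset.card_le_univ S.1
      rwa [S.2, Fintype.card_fin] at this
    have hS : S.1 = Finset.univ :=
      Finset.eq_univ_of_card _ (by rw [S.2, Fintype.card_fin]; omega)
    have hT : T.1 = Finset.univ :=
      Finset.eq_univ_of_card _ (by rw [T.2, Fintype.card_fin]; omega)
    rw [hS, hT]

lemma winners_eq_univ_of_degenerate (h : ¬(0 < k ∧ k < m)) (f : Committee m k → ℝ)
    (E : Election m) : winners f E = Set.univ := by
  ext S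
  simp only [winners, Set.mem_setOf_eq, Set.mem_univ, iff_true]
  intro T
  rw [committee_eq_of_degenerate h S T]

lemma score_replaceVote (f : Committee m k → ℝ) (E : Election m) (i₀ : Fin E.n)
    (v' : Equiv.Perm (Fin m)) (S : Committee m k) :
    score f (replaceVote E i₀ v') S
      = score f E S - f (commPos (E.vote i₀) S) + f (commPos v' S) := by
  have h1 : score f (replaceVote E i₀ v') S
      = ∑ i : Fin E.n, f (commPos (Function.update E.vote i₀ v' i) S) := rfl
  have h2 : (fun i : Fin E.n => f (commPos (Function.update E.vote i₀ v' i) S))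
      = Function.update (fun i => f (commPos (E.vote i) S)) i₀ (f (commPos v' S)) := by
    funext i
    exact Function.apply_update (fun _ v => f (commPos v S)) E.vote i₀ v' i
  rw [h1, h2, Finset.sum_update_of_mem (Finset.mem_univ i₀),
    Finset.sum_sdiff_eq_sub (Finset.subset_univ _), Finset.sum_singleton]
  unfold score
  ring

lemma image_swap_of_mem_not_mem {a b : Fin m} {A : Finset (Fin m)} (ha : a ∈ A) (hb : b ∉ A) :
    A.image (Equiv.swap a b) = insert b (A.erase a) := by
  ext x
  simp only [Finset.mem_image, Finset.mem_insert, Finset.mem_erase]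
  constructor
  · rintro ⟨y, hy, rfl⟩
    rcases eq_or_ne y a with rfl | hya
    · left; rw [Equiv.swap_apply_left]
    rcases eq_or_ne y b with rfl | hyb
    · exact absurd hy hb
    · rw [Equiv.swap_apply_of_ne_of_ne hya hyb]; exact Or.inr ⟨hya, hy⟩
  · rintro (rfl | ⟨hxa, hx⟩)
    · exact ⟨a, ha, Equiv.swap_apply_left _ _⟩
    · exact ⟨x, hx, Equiv.swap_apply_of_ne_of_ne hxa (fun h => hb (h ▸ hx))⟩

lemma image_swap_of_mem_mem {a b : Fin m} {A : Finset (Fin m)} (ha : a ∈ A) (hb : b ∈ A) :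
    A.image (Equiv.swap a b) = A := by
  apply Finset.eq_of_subset_of_card_le
  · rintro x hx
    rw [Finset.mem_image] at hx
    obtain ⟨y, hy, rfl⟩ := hx
    rcases eq_or_ne y a with rfl | hya
    · rwa [Equiv.swap_apply_left]
    rcases eq_or_ne y b with rfl | hyb
    · rwa [Equiv.swap_apply_right]
    · rwa [Equiv.swap_apply_of_ne_of_ne hya hyb]
  · rw [Finset.card_image_of_injective _ (Equiv.swap a b).injective]

lemma image_swap_of_not_mem_not_mem {a b : Fin m} {A : Finset (Fin m)} (ha : a ∉ A)
    (hb : b ∉ A) : A.image (Equiv.swap a b) = A := by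
  have : A.image (Equiv.swap a b) = A.image id := by
    apply Finset.image_congr
    intro x hx
    exact Equiv.swap_apply_of_ne_of_ne (fun h => ha (h ▸ hx)) (fun h => hb (h ▸ hx))
  rw [this, Finset.image_id]

lemma sum_image_perm (γ : Fin m → ℝ) (σ : Equiv.Perm (Fin m)) (A : Finset (Fin m)) :
    ∑ p ∈ A.image σ, γ p = ∑ p ∈ A, γ (σ p) :=
  Finset.sum_image (fun x _ y _ h => σ.injective h)

/-- The general bound used in the "easy" direction. -/
lemma swap_sum_le {γ : Fin m → ℝ} (hγ : Antitone γ) {a q : Fin m} (hq : q ≤ a)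
    (A : Finset (Fin m)) :
    (∑ p ∈ A.image (Equiv.swap a q), γ p) - ∑ p ∈ A, γ p ≤ γ q - γ a := by
  have hle : γ a ≤ γ q := hγ hq
  by_cases ha : a ∈ A <;> by_cases hqa : q ∈ A
  · rw [image_swap_of_mem_mem ha hqa]; linarith
  · rw [image_swap_of_mem_not_mem ha hqa, Finset.sum_insert (fun h => hqa (Finset.mem_of_mem_erase h)),
      Finset.sum_erase_eq_sub ha]
    linarith
  · rw [Equiv.swap_comm, image_swap_of_mem_not_mem hqa ha,
      Finset.sum_insert (fun h => ha (Finset.mem_of_mem_erase h)), Finset.sum_erase_eq_sub hqa]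
    linarith
  · rw [image_swap_of_not_mem_not_mem ha hqa]; linarith

lemma swap_sum_eq (γ : Fin m → ℝ) {a q : Fin m} {A : Finset (Fin m)} (ha : a ∈ A) (hqa : q ∉ A) :
    (∑ p ∈ A.image (Equiv.swap a q), γ p) - ∑ p ∈ A, γ p = γ q - γ a := by
  rw [image_swap_of_mem_not_mem ha hqa,
    Finset.sum_insert (fun h => hqa (Finset.mem_of_mem_erase h)), Finset.sum_erase_eq_sub ha]
  ring

/-- The election consisting of all rankings, once each. -/
noncomputable def allE (m : ℕ) : Election m :=
  ⟨Fintype.card (Equiv.Perm (Fin m)), fun i => (Fintype.equivFin (Equiv.Perm (Fin m))).symm i⟩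

lemma score_allE (f : Committee m k → ℝ) (S : Committee m k) :
    score f (allE m) S = ∑ v : Equiv.Perm (Fin m), f (commPos v S) :=
  Equiv.sum_comp (Fintype.equivFin (Equiv.Perm (Fin m))).symm (fun v => f (commPos v S))

lemma exists_perm_image (S T : Finset (Fin m)) (h : S.card = T.card) :
    ∃ π : Equiv.Perm (Fin m), T.image π = S := by
  classical
  have hT : Fintype.card {a : Fin m // a ∈ T} = T.card := Fintype.card_coe T
  have hS : Fintype.card {a : Fin m // a ∈ S} = S.card := Fintype.card_coe S
  have e1 : {a : Fin m // a ∈ T} ≃ {a : Fin m // a ∈ S} :=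
    Fintype.equivOfCardEq (by rw [hT, hS, h])
  have e2 : {a : Fin m // ¬a ∈ T} ≃ {a : Fin m // ¬a ∈ S} := by
    apply Fintype.equivOfCardEq
    rw [Fintype.card_subtype_compl, Fintype.card_subtype_compl, hT, hS, h]
  refine ⟨(Equiv.sumCompl (· ∈ T)).symm.trans ((e1.sumCongr e2).trans (Equiv.sumCompl (· ∈ S))), ?_⟩
  apply Finset.eq_of_subset_of_card_le
  · rintro x hx
    rw [Finset.mem_image] at hx
    obtain ⟨y, hy, rfl⟩ := hx
    simp only [Equiv.trans_apply, Equiv.sumCompl_symm_apply_of_pos (p := (· ∈ T)) hy,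
      Equiv.sumCongr_apply, Sum.map_inl, Equiv.sumCompl_apply_inl]
    exact (e1 ⟨y, hy⟩).2
  · rw [Finset.card_image_of_injective _ (Equiv.injective _), h]

lemma score_allE_const (f : Committee m k → ℝ) (S T : Committee m k) :
    score f (allE m) S = score f (allE m) T := by
  obtain ⟨π, hπ⟩ := exists_perm_image S.1 T.1 (by rw [S.2, T.2])
  rw [score_allE, score_allE]
  have key : ∀ v : Equiv.Perm (Fin m), commPos (v * π) T = commPos v S := by
    intro v
    apply Subtype.ext
    show T.1.image ⇑(v * π) = S.1.image v
    have : ⇑(v * π) = v ∘ π := rfl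
    rw [this, ← Finset.image_image, hπ]
  calc ∑ v : Equiv.Perm (Fin m), f (commPos v S)
      = ∑ v : Equiv.Perm (Fin m), f (commPos (v * π) T) := by
        apply Finset.sum_congr rfl; intro v _; rw [key]
    _ = ∑ v : Equiv.Perm (Fin m), f (commPos v T) :=
        Equiv.sum_comp (Equiv.mulRight π) (fun v => f (commPos v T))

lemma allE_winner (f : Committee m k → ℝ) (S : Committee m k) : S ∈ winners f (allE m) := by
  intro T
  rw [score_allE_const f T S]

lemma card_shift {j : Fin m} (hj : 1 ≤ (j : ℕ)) {A : Finset (Fin m)} (hjA : j ∈ A)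
    (hpA : finPred j ∉ A) : (insert (finPred j) (A.erase j)).card = A.card := by
  rw [Finset.card_insert_of_notMem (fun h => hpA (Finset.mem_of_mem_erase h)),
    Finset.card_erase_of_mem hjA]
  have : 1 ≤ A.card := Finset.card_pos.2 ⟨j, hjA⟩
  omega

/-- The crucial consequence of non-crossing monotonicity. -/
lemma key_ineq {f : ∀ m k, Committee m k → ℝ} (hncm : NonCrossingMono f) {m k : ℕ}
    (j : Fin m) (hj : 1 ≤ (j : ℕ)) (I : Committee m k) (hjI : j ∈ I.1)
    (hpI : finPred j ∉ I.1) (J : Committee m k) :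
    f m k ⟨J.1.image (Equiv.swap j (finPred j)), by
        rw [Finset.card_image_of_injective _ (Equiv.swap j (finPred j)).injective]; exact J.2⟩
      - f m k J
    ≤ f m k ⟨I.1.image (Equiv.swap j (finPred j)), by
        rw [Finset.card_image_of_injective _ (Equiv.swap j (finPred j)).injective]; exact I.2⟩
      - f m k I := by
  classical
  set E := allE m with hE
  set i₀ : Fin E.n := Fintype.equivFin (Equiv.Perm (Fin m)) 1 with hi₀
  have hv : E.vote i₀ = 1 := Equiv.symm_apply_apply _ 1
  have hW : I ∈ winners (f m k) E := allE_winner _ _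
  have h1 : ((finPred j : Fin m) : ℕ) + 1 = ((E.vote i₀) j : ℕ) := by
    rw [hv]; show (j : ℕ) - 1 + 1 = ((1 : Equiv.Perm (Fin m)) j : ℕ)
    rw [Equiv.Perm.one_apply]; omega
  have h2 : (E.vote i₀).symm (finPred j) ∉ I.1 := by
    rw [hv]; exact hpI
  have hres := hncm m k E I hW i₀ j (finPred j) hjI h1 h2
  have hcp : ∀ S : Committee m k,
      commPos ((E.vote i₀).trans (Equiv.swap (E.vote i₀ j) (finPred j))) S
        = ⟨S.1.image (Equiv.swap j (finPred j)), by
            rw [Finset.card_image_of_injective _ (Equiv.swap j (finPred j)).injective]; exact S.2⟩ := by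
    intro S
    apply Subtype.ext
    show S.1.image _ = S.1.image _
    apply Finset.image_congr
    intro x _
    rw [hv]
    rfl
  have hone : ∀ S : Committee m k, commPos (E.vote i₀) S = S := by
    intro S
    apply Subtype.ext
    show S.1.image _ = S.1
    rw [hv]
    have : ⇑(1 : Equiv.Perm (Fin m)) = id := rfl
    rw [this, Finset.image_id]
  have hJ := hres J
  rw [score_replaceVote, score_replaceVote, hcp, hcp, hone, hone] at hJ
  have hconst : score (f m k) E J = score (f m k) E I := score_allE_const _ _ _
  rw [hconst] at hJ
  linarith

end NCMProof


namespace NCMProof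

variable {m k : ℕ}

lemma card_low (hkm : k ≤ m) :
    (Finset.univ.filter fun p : Fin m => (p : ℕ) < k).card = k := by
  have himg : (Finset.univ.filter fun p : Fin m => (p : ℕ) < k)
      = Finset.univ.image (Fin.castLE hkm) := by
    ext x
    simp only [Finset.mem_filter, Finset.mem_univ, true_and, Finset.mem_image]
    constructor
    · intro hx
      exact ⟨⟨(x : ℕ), hx⟩, by ext; rfl⟩
    · rintro ⟨i, -, rfl⟩
      exact i.2
  rw [himg, Finset.card_image_of_injective _ (Fin.castLE_injective hkm), Finset.card_univ,
    Fintype.card_fin]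

lemma low_of_closed {S : Finset (Fin m)} (hS : S.card = k)
    (H : ∀ j ∈ S, 1 ≤ (j : ℕ) → finPred j ∈ S) :
    S = Finset.univ.filter fun p : Fin m => (p : ℕ) < k := by
  have hkm : k ≤ m := by
    rw [← hS]
    have := Finset.card_le_univ S
    rwa [Fintype.card_fin] at this
  have hsub : S ⊆ Finset.univ.filter fun p : Fin m => (p : ℕ) < k := by
    intro p hp
    rw [Finset.mem_filter]
    refine ⟨Finset.mem_univ _, ?_⟩
    have hall : ∀ d : ℕ, d ≤ (p : ℕ) →
        (⟨(p : ℕ) - d, lt_of_le_of_lt (Nat.sub_le _ _) p.2⟩ : Fin m) ∈ S := by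
      intro d
      induction d with
      | zero => intro _; simpa using hp
      | succ d ih =>
        intro hd
        have ha := ih (by omega)
        have h1 : 1 ≤ ((⟨(p : ℕ) - d, lt_of_le_of_lt (Nat.sub_le _ _) p.2⟩ : Fin m) : ℕ) := by
          simp only []; omega
        have := H _ ha h1
        have heq : finPred (⟨(p : ℕ) - d, lt_of_le_of_lt (Nat.sub_le _ _) p.2⟩ : Fin m)
            = (⟨(p : ℕ) - (d + 1), lt_of_le_of_lt (Nat.sub_le _ _) p.2⟩ : Fin m) := by
          apply Fin.ext
          show (p : ℕ) - d - 1 = (p : ℕ) - (d + 1)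
          omega
        rwa [heq] at this
    -- the map i ↦ p - i embeds Fin (p+1) into S
    have hinj : Function.Injective
        (fun i : Fin ((p : ℕ) + 1) => (⟨(p : ℕ) - (i : ℕ), lt_of_le_of_lt (Nat.sub_le _ _) p.2⟩ : Fin m)) := by
      intro i j hij
      have := congrArg Fin.val hij
      simp only [] at this
      apply Fin.ext
      omega
    have hsub2 : Finset.univ.image
        (fun i : Fin ((p : ℕ) + 1) => (⟨(p : ℕ) - (i : ℕ), lt_of_le_of_lt (Nat.sub_le _ _) p.2⟩ : Fin m)) ⊆ S := by
      intro x hx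
      rw [Finset.mem_image] at hx
      obtain ⟨i, -, rfl⟩ := hx
      exact hall (i : ℕ) (by omega)
    have hcard := Finset.card_le_card hsub2
    rw [Finset.card_image_of_injective _ hinj, Finset.card_univ, Fintype.card_fin, hS] at hcard
    omega
  exact Finset.eq_of_subset_of_card_le hsub (by rw [card_low hkm, hS])

lemma forall₂_map_sum_le {γ : Fin m → ℝ} (hγ : Antitone γ) :
    ∀ {l₁ l₂ : List (Fin m)}, List.Forall₂ (· ≤ ·) l₁ l₂ →
      (l₂.map γ).sum ≤ (l₁.map γ).sum := by
  intro l₁ l₂ h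
  induction h with
  | nil => simp
  | cons hab _ ih =>
    simp only [List.map_cons, List.sum_cons]
    exact add_le_add (hγ hab) ih

lemma sum_sort (s : Finset (Fin m)) (γ : Fin m → ℝ) :
    ∑ p ∈ s, γ p = ((s.sort (· ≤ ·)).map γ).sum :=
  calc ∑ p ∈ s, γ p = (Multiset.map γ s.val).sum := rfl
  _ = (Multiset.map γ ↑(s.sort (· ≤ ·))).sum := by rw [Finset.sort_eq]
  _ = ((s.sort (· ≤ ·)).map γ).sum := by rw [Multiset.map_coe, Multiset.sum_coe]

lemma dominates_sum_le {γ : Fin m → ℝ} (hγ : Antitone γ) {A B : Finset (Fin m)}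
    (h : Dominates A B) : ∑ p ∈ B, γ p ≤ ∑ p ∈ A, γ p := by
  rw [sum_sort, sum_sort]
  exact forall₂_map_sum_le hγ h

lemma winners_eq_of_const_diff {f g : Committee m k → ℝ} {c : ℝ}
    (h : ∀ S, f S = g S + c) (E : Election m) : winners f E = winners g E := by
  have hs : ∀ S, score f E S = score g E S + E.n * c := by
    intro S
    unfold score
    rw [Finset.sum_congr rfl (fun i _ => h _), Finset.sum_add_distrib]
    simp [mul_comm]
  ext S
  simp only [winners, Set.mem_setOf_eq]
  constructor <;> intro hS T <;> have := hS T <;> rw [hs, hs] at * <;> linarith [hS T]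

end NCMProof


namespace NCMProof

variable {m k : ℕ}

/-- Shift committee by the swap `j ↔ j-1`. -/
def shiftC (j : Fin m) (I : Committee m k) : Committee m k :=
  ⟨I.1.image (Equiv.swap j (finPred j)), by
    rw [Finset.card_image_of_injective _ (Equiv.swap j (finPred j)).injective]; exact I.2⟩

lemma key_ineq' {f : ∀ m k, Committee m k → ℝ} (hncm : NonCrossingMono f) {m k : ℕ}
    (j : Fin m) (hj : 1 ≤ (j : ℕ)) (I : Committee m k) (hjI : j ∈ I.1)
    (hpI : finPred j ∉ I.1) (J : Committee m k) :
    f m k (shiftC j J) - f m k J ≤ f m k (shiftC j I) - f m k I :=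
  key_ineq hncm j hj I hjI hpI J

lemma forward_main {f : ∀ m k, Committee m k → ℝ} (hncm : NonCrossingMono f)
    (m k : ℕ) (hk : 0 < k) (hkm : k < m) :
    ∃ γ : Fin m → ℝ, IsSWSF γ ∧ ∃ c : ℝ, ∀ S : Committee m k,
      f m k S = (∑ p ∈ S.1, γ p) + c := by
  classical
  have hcan : ∀ j : Fin m, 1 ≤ (j : ℕ) → ∃ I : Committee m k, j ∈ I.1 ∧ finPred j ∉ I.1 := by
    intro j hj
    have hcard : k - 1 ≤ (Finset.univ \ {j, finPred j} : Finset (Fin m)).card := by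
      rw [Finset.card_sdiff_of_subset (Finset.subset_univ _), Finset.card_univ, Fintype.card_fin]
      have h2 : ({j, finPred j} : Finset (Fin m)).card ≤ 2 := by
        apply le_trans (Finset.card_insert_le _ _)
        rw [Finset.card_singleton]
      omega
    obtain ⟨B, hB, hBcard⟩ := Finset.exists_subset_card_eq hcard
    have hjB : j ∉ B := by
      intro h
      have := hB h
      simp [Finset.mem_sdiff] at this
    refine ⟨⟨insert j B, ?_⟩, Finset.mem_insert_self _ _, ?_⟩
    · rw [Finset.card_insert_of_notMem hjB, hBcard]; omega
    · intro hmem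
      rcases Finset.mem_insert.1 hmem with h | h
      · exact finPred_ne j hj h
      · have := hB h
        simp [Finset.mem_sdiff] at this
  have hδex : ∀ j : Fin m, 1 ≤ (j : ℕ) → ∃ d : ℝ, 0 ≤ d ∧
      ∀ I : Committee m k, j ∈ I.1 → finPred j ∉ I.1 → f m k (shiftC j I) = f m k I + d := by
    intro j hj
    obtain ⟨I₀, hjI₀, hpI₀⟩ := hcan j hj
    refine ⟨f m k (shiftC j I₀) - f m k I₀, ?_, ?_⟩
    · have h1 := key_ineq' hncm j hj I₀ hjI₀ hpI₀ (shiftC j I₀)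
      have h2 : shiftC j (shiftC j I₀) = I₀ := by
        apply Subtype.ext
        show (I₀.1.image _).image _ = I₀.1
        rw [Finset.image_image]
        have hid : (⇑(Equiv.swap j (finPred j)) ∘ ⇑(Equiv.swap j (finPred j))) = id := by
          funext x; simp [Equiv.swap_apply_self]
        rw [hid, Finset.image_id]
      rw [h2] at h1
      linarith
    · intro I hjI hpI
      have h1 := key_ineq' hncm j hj I₀ hjI₀ hpI₀ I
      have h2 := key_ineq' hncm j hj I hjI hpI I₀
      linarith
  set δ : Fin m → ℝ := fun j => if h : 1 ≤ (j : ℕ) then (hδex j h).choose else 0 with hδdef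
  have hδ0 : ∀ j, 0 ≤ δ j := by
    intro j
    rw [hδdef]
    dsimp only
    split
    · exact (hδex j (by assumption)).choose_spec.1
    · exact le_refl 0
  have hδspec : ∀ (j : Fin m), 1 ≤ (j : ℕ) → ∀ I : Committee m k, j ∈ I.1 → finPred j ∉ I.1 →
      f m k (shiftC j I) = f m k I + δ j := by
    intro j hj I h1 h2
    have : δ j = (hδex j hj).choose := by rw [hδdef]; dsimp only; rw [dif_pos hj]
    rw [this]
    exact (hδex j hj).choose_spec.2 I h1 h2
  set γ : Fin m → ℝ := fun p => ∑ j ∈ Finset.univ.filter (fun j => p < j), δ j with hγdef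
  have hγ0 : ∀ p, 0 ≤ γ p := fun p => Finset.sum_nonneg (fun j _ => hδ0 j)
  have hγanti : Antitone γ := by
    intro p p' hpp'
    apply Finset.sum_le_sum_of_subset_of_nonneg
    · intro j hjmem
      rw [Finset.mem_filter] at hjmem ⊢
      exact ⟨hjmem.1, lt_of_le_of_lt hpp' hjmem.2⟩
    · intro j _ _
      exact hδ0 j
  have hstep : ∀ j : Fin m, 1 ≤ (j : ℕ) → γ (finPred j) = δ j + γ j := by
    intro j hj
    rw [hγdef]
    dsimp only
    have hfil : Finset.univ.filter (fun x : Fin m => finPred j < x)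
        = insert j (Finset.univ.filter (fun x : Fin m => j < x)) := by
      ext x
      simp only [Finset.mem_filter, Finset.mem_univ, true_and, Finset.mem_insert]
      rw [Fin.lt_def, Fin.lt_def, finPred_val]
      constructor
      · intro h
        rcases eq_or_ne x j with rfl | hne
        · exact Or.inl rfl
        · have hne' : (j : ℕ) ≠ (x : ℕ) := fun hh => hne (Fin.ext hh.symm)
          exact Or.inr (by omega)
      · rintro (rfl | h) <;> omega
    rw [hfil, Finset.sum_insert (by simp)]
  set low : Finset (Fin m) := Finset.univ.filter (fun p : Fin m => (p : ℕ) < k) with hlow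
  have hlowcard : low.card = k := card_low (le_of_lt hkm)
  set lowC : Committee m k := ⟨low, hlowcard⟩ with hlowC
  have tele : ∀ N, ∀ S : Committee m k, (∑ p ∈ S.1, (p : ℕ)) = N →
      f m k S + ∑ p ∈ low, γ p = f m k lowC + ∑ p ∈ S.1, γ p := by
    intro N
    induction N using Nat.strong_induction_on with
    | _ N ih =>
      intro S hN
      by_cases hclosed : ∀ j ∈ S.1, 1 ≤ (j : ℕ) → finPred j ∈ S.1
      · have hSlow : S = lowC := Subtype.ext (low_of_closed S.2 hclosed)
        rw [hSlow]
      · push_neg at hclosed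
        obtain ⟨j, hjS, hj1, hpS⟩ := hclosed
        set S' := shiftC j S with hS'
        have hS'1 : S'.1 = insert (finPred j) (S.1.erase j) := image_swap_of_mem_not_mem hjS hpS
        have hf' : f m k S' = f m k S + δ j := hδspec j hj1 S hjS hpS
        have hpe : finPred j ∉ S.1.erase j := fun h => hpS (Finset.mem_of_mem_erase h)
        have hγsum : ∑ p ∈ S'.1, γ p = γ (finPred j) + (∑ p ∈ S.1, γ p - γ j) := by
          rw [hS'1, Finset.sum_insert hpe, Finset.sum_erase_eq_sub hjS]
        have e1 : ∑ p ∈ S'.1, (p : ℕ) = ((finPred j : Fin m) : ℕ) + ∑ p ∈ S.1.erase j, (p : ℕ) := by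
          rw [hS'1, Finset.sum_insert hpe]
        have e2 : (j : ℕ) + ∑ p ∈ S.1.erase j, (p : ℕ) = ∑ p ∈ S.1, (p : ℕ) :=
          Finset.add_sum_erase _ _ hjS
        have hlt : ((finPred j : Fin m) : ℕ) < (j : ℕ) := by rw [finPred_val]; omega
        have hnsum : ∑ p ∈ S'.1, (p : ℕ) < N := by omega
        have hIH := ih _ hnsum S' rfl
        have hst := hstep j hj1
        rw [hf', hγsum] at hIH
        linarith
  refine ⟨γ, ⟨hγanti, hγ0⟩, f m k lowC - ∑ p ∈ low, γ p, ?_⟩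
  intro S
  have := tele _ S rfl
  linarith

end NCMProof


/-- a committee scoring rule is non-crossing monotone if and only
if it is weakly separable. -/
theorem noncrossing_monotone_iff_weakly_separable
    (f : ∀ m k, Committee m k → ℝ) (hf : ∀ m k, IsCSF (f m k)) :
    NonCrossingMono f ↔ WeaklySeparableRule f := by
  classical
  constructor
  · intro hncm
    have main : ∀ m k, ∃ g : Committee m k → ℝ,
        IsCSF g ∧ WeaklySeparable g ∧ ∀ E : Election m, winners (f m k) E = winners g E := by
      intro m k
      by_cases h : 0 < k ∧ k < m
      · obtain ⟨γ, hsw, c, hfc⟩ := NCMProof.forward_main hncm m k h.1 h.2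
        refine ⟨fun S => ∑ p ∈ S.1, γ p, ⟨?_, ?_⟩, ⟨γ, hsw, fun S => rfl⟩, ?_⟩
        · intro S
          exact Finset.sum_nonneg fun p _ => hsw.2 p
        · intro A B hAB
          exact NCMProof.dominates_sum_le hsw.1 hAB
        · intro E
          exact NCMProof.winners_eq_of_const_diff hfc E
      · refine ⟨fun _ => 0, ⟨fun S => le_refl 0, fun A B _ => le_refl 0⟩,
          ⟨fun _ => 0, ⟨antitone_const, fun _ => le_refl 0⟩, by simp⟩, ?_⟩
        intro E
        rw [NCMProof.winners_eq_univ_of_degenerate h, NCMProof.winners_eq_univ_of_degenerate h]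
    choose g hg1 hg2 hg3 using main
    exact ⟨g, hg1, hg2, fun m k E => hg3 m k E⟩
  · rintro ⟨g, hgCSF, hgsep, hsame⟩
    intro m k E W hW i₀ c q hcW hq hd
    obtain ⟨γ, ⟨hγanti, hγ0⟩, hgty⟩ := hgsep m k
    have hqa : q ≤ E.vote i₀ c := by
      rw [Fin.le_def]
      omega
    rw [hsame m k] at hW ⊢
    intro T
    rw [NCMProof.score_replaceVote, NCMProof.score_replaceVote]
    have hcp : ∀ S : Committee m k,
        (commPos ((E.vote i₀).trans (Equiv.swap (E.vote i₀ c) q)) S).1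
          = (S.1.image (E.vote i₀)).image (Equiv.swap (E.vote i₀ c) q) := by
      intro S
      show S.1.image _ = _
      rw [Finset.image_image]
      rfl
    have hgcp : ∀ S : Committee m k,
        g m k (commPos ((E.vote i₀).trans (Equiv.swap (E.vote i₀ c) q)) S)
            - g m k (commPos (E.vote i₀) S)
          = (∑ p ∈ (S.1.image (E.vote i₀)).image (Equiv.swap (E.vote i₀ c) q), γ p)
            - ∑ p ∈ S.1.image (E.vote i₀), γ p := by
      intro S
      rw [hgty, hgty, hcp S]
      rfl
    have hT := NCMProof.swap_sum_le hγanti hqa (T.1.image (E.vote i₀))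
    have haW : E.vote i₀ c ∈ W.1.image (E.vote i₀) := Finset.mem_image_of_mem _ hcW
    have hqW : q ∉ W.1.image (E.vote i₀) := by
      intro hmem
      rw [Finset.mem_image] at hmem
      obtain ⟨x, hx, hxq⟩ := hmem
      have hxd : x = (E.vote i₀).symm q := by rw [← hxq]; simp
      rw [hxd] at hx
      exact hd hx
    have hWeq := NCMProof.swap_sum_eq γ haW hqW
    have h1 := hgcp T
    have h2 := hgcp W
    linarith [hW T]
end

section
/- The k-Approval Chamberlin–Courant rule is not prefix-monotone: for k = 2 and the election over candidates {a,b,c,d} containing one vote for each of the 24 linear orders, every 2-element committee is winning, but after shifting b and c forward by one position each in the vote a ≻ b ≻ c ≻ d (obtaining b ≻ c ≻ a ≻ d), the committee {b,c} is no longer winning because the score of {c,d} strictly exceeds it. -/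
open Finset

lemma count20 : ∀ S : Finset (Fin 4), S.card = 2 →
  ((Finset.univ : Finset (Equiv.Perm (Fin 4))).filter
    (fun v : Equiv.Perm (Fin 4) => ¬ ((S.image ⇑v).filter (fun p : Fin 4 => (p:ℕ) < 2)).card = 0)).card = 20 := by
  decide

lemma score_const (E : Election 4) (hbij : Function.Bijective E.vote) (S : Committee 4 2) :
    score (ccF 4 2) E S = 20 := by
  have h1 : score (ccF 4 2) E S = ∑ v : Equiv.Perm (Fin 4), ccF 4 2 (commPos v S) :=
    Fintype.sum_bijective E.vote hbij _ _ (fun i => rfl)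
  have h2 : ∀ v : Equiv.Perm (Fin 4), ccF 4 2 (commPos v S) =
      (if ¬ ((S.1.image ⇑v).filter (fun p : Fin 4 => (p:ℕ) < 2)).card = 0 then (1:ℝ) else 0) := by
    intro v; rw [ite_not]; rfl
  rw [h1]
  simp only [h2]
  rw [Finset.sum_boole]
  rw [count20 S.1 S.2]
  norm_num

lemma score_replace (E : Election 4) (hbij : Function.Bijective E.vote)
    (i₀ : Fin E.n) (v' : Equiv.Perm (Fin 4)) (S : Committee 4 2) :
    score (ccF 4 2) (replaceVote E i₀ v') S
      = ccF 4 2 (commPos v' S) + (20 - ccF 4 2 (commPos (E.vote i₀) S)) := by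
  have hmem : i₀ ∈ (Finset.univ : Finset (Fin E.n)) := mem_univ _
  have hrw : score (ccF 4 2) (replaceVote E i₀ v') S
      = ∑ i : Fin E.n, ccF 4 2 (commPos (Function.update E.vote i₀ v' i) S) := rfl
  rw [hrw, ← Finset.add_sum_erase _ _ hmem]
  congr 1
  · rw [Function.update_self]
  · have : ∀ i ∈ Finset.univ.erase i₀,
        ccF 4 2 (commPos (Function.update E.vote i₀ v' i) S)
          = ccF 4 2 (commPos (E.vote i) S) := by
      intro i hi
      rw [Function.update_of_ne (Finset.mem_erase.1 hi).1]
    rw [Finset.sum_congr rfl this, Finset.sum_erase_eq_sub hmem]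
    rw [← score_const E hbij S]
    rfl

/-- the `k`-Approval Chamberlin–Courant rule is not
prefix-monotone: in the election over 4 candidates `a,b,c,d = 0,1,2,3` with one
vote for each of the 24 rankings, every 2-committee wins; but after shifting `b`
and `c` forward in the vote `a ≻ b ≻ c ≻ d` (the identity vote, yielding
`b ≻ c ≻ a ≻ d`), the committee `{b,c}` scores strictly less than `{c,d}` and is
no longer winning. -/
theorem alpha_k_cc_not_prefix_monotone
    (E : Election 4) (hn : E.n = 24) (hbij : Function.Bijective E.vote) :
    (∀ W : Committee 4 2, W ∈ winners (ccF 4 2) E) ∧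
    ∀ i₀ : Fin E.n, E.vote i₀ = Equiv.refl (Fin 4) →
      ∀ v' : Equiv.Perm (Fin 4), (∀ x, v' x = ![2, 0, 1, 3] x) →
        score (ccF 4 2) (replaceVote E i₀ v') ⟨{1, 2}, by decide⟩ <
          score (ccF 4 2) (replaceVote E i₀ v') ⟨{2, 3}, by decide⟩ ∧
        (⟨{1, 2}, by decide⟩ : Committee 4 2) ∉ winners (ccF 4 2) (replaceVote E i₀ v') := by

  constructor
  · intro W T
    rw [score_const E hbij T, score_const E hbij W]
  · intro i₀ h0 v' hv'
    have himg12 : ({1, 2} : Finset (Fin 4)).image ⇑v' = {0, 1} := by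
      have h1 : v' 1 = 0 := by rw [hv' 1]; rfl
      have h2 : v' 2 = 1 := by rw [hv' 2]; rfl
      simp [Finset.image_insert, Finset.image_singleton, h1, h2]
    have himg23 : ({2, 3} : Finset (Fin 4)).image ⇑v' = {1, 3} := by
      have h2 : v' 2 = 1 := by rw [hv' 2]; rfl
      have h3 : v' 3 = 3 := by rw [hv' 3]; rfl
      simp [Finset.image_insert, Finset.image_singleton, h2, h3]
    have hA : score (ccF 4 2) (replaceVote E i₀ v') ⟨{1, 2}, by decide⟩ = 20 := by
      rw [score_replace E hbij i₀ v', h0]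
      have e1 : ccF 4 2 (commPos v' ⟨{1, 2}, by decide⟩) = 1 := by
        unfold ccF commPos
        simp only [himg12]
        have hc : (({0, 1} : Finset (Fin 4)).filter (fun p : Fin 4 => (p:ℕ) < 2)).card = 2 := by decide
        rw [hc]; norm_num
      have e2 : ccF 4 2 (commPos (Equiv.refl (Fin 4)) ⟨{1, 2}, by decide⟩) = 1 := by
        unfold ccF commPos
        simp only [Equiv.coe_refl, Finset.image_id]
        have hc : (({1, 2} : Finset (Fin 4)).filter (fun p : Fin 4 => (p:ℕ) < 2)).card = 1 := by decide
        rw [hc]; norm_num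
      rw [e1, e2]; ring
    have hB : score (ccF 4 2) (replaceVote E i₀ v') ⟨{2, 3}, by decide⟩ = 21 := by
      rw [score_replace E hbij i₀ v', h0]
      have e1 : ccF 4 2 (commPos v' ⟨{2, 3}, by decide⟩) = 1 := by
        unfold ccF commPos
        simp only [himg23]
        have hc : (({1, 3} : Finset (Fin 4)).filter (fun p : Fin 4 => (p:ℕ) < 2)).card = 1 := by decide
        rw [hc]; norm_num
      have e2 : ccF 4 2 (commPos (Equiv.refl (Fin 4)) ⟨{2, 3}, by decide⟩) = 0 := by
        unfold ccF commPos
        simp only [Equiv.coe_refl, Finset.image_id]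
        have hc : (({2, 3} : Finset (Fin 4)).filter (fun p : Fin 4 => (p:ℕ) < 2)).card = 0 := by decide
        rw [hc]; norm_num
      rw [e1, e2]; ring
    have hlt : score (ccF 4 2) (replaceVote E i₀ v') ⟨{1, 2}, by decide⟩ <
        score (ccF 4 2) (replaceVote E i₀ v') ⟨{2, 3}, by decide⟩ := by
      rw [hA, hB]; norm_num
    refine ⟨hlt, fun hw => absurd (hw ⟨{2, 3}, by decide⟩) (not_le.2 hlt)⟩
end

section
/- If a decomposable committee scoring rule is narrow-top consistent, then it is representation-focused. -/
open Finset

section NarrowTopAux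

variable {m k : ℕ}

lemma fin_le_apply_aux {g : Fin k → Fin m} (hg : StrictMono g) :
    ∀ (n : ℕ) (hn : n < k), n ≤ (g ⟨n, hn⟩ : ℕ) := by
  intro n
  induction n with
  | zero => intro _; exact Nat.zero_le _
  | succ n ih =>
    intro hn
    have h1 : n < k := by omega
    have h2 : g ⟨n, h1⟩ < g ⟨n + 1, hn⟩ := hg (by simp [Fin.lt_def])
    have h3 := ih h1
    have h4 : (g ⟨n, h1⟩ : ℕ) < (g ⟨n + 1, hn⟩ : ℕ) := h2
    omega

lemma fin_le_apply {g : Fin k → Fin m} (hg : StrictMono g) (t : Fin k) :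
    (t : ℕ) ≤ (g t : ℕ) := by
  have := fin_le_apply_aux hg t.1 t.2
  simpa using this

lemma fin_apply_le {g : Fin k → Fin m} (hg : StrictMono g) (t : Fin k) :
    (g t : ℕ) ≤ m - k + t := by
  have hrev : StrictMono fun j : Fin k => (g j.rev).rev := by
    intro a b hab
    exact Fin.rev_lt_rev.mpr (hg (Fin.rev_lt_rev.mpr hab))
  have h1 := fin_le_apply hrev t.rev
  simp only [Fin.rev_rev] at h1
  have h2 := (g t).isLt
  have h3 := t.isLt
  rw [Fin.val_rev, Fin.val_rev] at h1
  omega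

lemma posAt_strictMono (S : Committee m k) : StrictMono fun t => posAt S t := by
  intro a b hab
  exact Subtype.coe_lt_coe.mpr ((S.1.orderIsoOfFin S.2).strictMono hab)

lemma posAt_lower (S : Committee m k) (t : Fin k) : (t : ℕ) ≤ (posAt S t : ℕ) :=
  fin_le_apply (posAt_strictMono S) t

lemma posAt_upper (S : Committee m k) (t : Fin k) : (posAt S t : ℕ) ≤ m - k + t :=
  fin_apply_le (posAt_strictMono S) t

/-- The committee given by the range of a (strictly monotone) injection. -/
def comOf (g : Fin k → Fin m) (hg : Function.Injective g) : Committee m k :=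
  ⟨Finset.univ.image g, by
    rw [Finset.card_image_of_injective _ hg, Finset.card_univ, Fintype.card_fin]⟩

lemma posAt_comOf {g : Fin k → Fin m} (hg : StrictMono g) (t : Fin k) :
    posAt (comOf g hg.injective) t = g t := by
  have h := Finset.orderEmbOfFin_unique (comOf g hg.injective).2
      (f := g) (fun x => Finset.mem_image_of_mem _ (Finset.mem_univ x)) hg
  show ((comOf g hg.injective).1.orderIsoOfFin _ t : Fin m) = g t
  rw [Finset.coe_orderIsoOfFin_apply, ← h]

end NarrowTopAux

/-- The key step: under narrow-top consistency, for every coordinate `s ≥ 1`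
the single-winner scoring function `γ m k s` is constant on the attainable
range of positions. -/
lemma gamma_const (γ : ∀ m k, Fin k → Fin m → ℝ) (hγ : ∀ m k t, IsSWSF (γ m k t))
    (hnt : NarrowTopConsistent (fun m k S => ∑ t : Fin k, γ m k t (posAt S t)))
    {m k : ℕ} (hk : 0 < k) (hkm : k ≤ m) (s : Fin k) (hs : 0 < (s : ℕ))
    (p : Fin m) (hsp : (s : ℕ) ≤ (p : ℕ)) (hpm : (p : ℕ) ≤ m - k + s) :
    γ m k s p = γ m k s ⟨(s : ℕ), lt_of_lt_of_le s.isLt hkm⟩ := by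
  classical
  have hm : 0 < m := lt_of_lt_of_le hk hkm
  haveI : NeZero m := ⟨by omega⟩
  have hpv := p.isLt
  -- the two relevant committees
  set gI : Fin k → Fin m := fun j => ⟨(j : ℕ), lt_of_lt_of_le j.isLt hkm⟩ with hgIdef
  have hgI : StrictMono gI := by
    intro a b hab
    simp only [hgIdef, Fin.lt_def]
    exact hab
  set gP : Fin k → Fin m := fun j =>
      ⟨if (j : ℕ) = 0 then 0 else (p : ℕ) - (s : ℕ) + (j : ℕ), by
        have := j.isLt; split <;> omega⟩ with hgPdef
  have hgP : StrictMono gP := by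
    intro a b hab
    have hav := a.isLt
    have hbv := b.isLt
    rw [Fin.lt_def] at hab ⊢
    simp only [hgPdef]
    split <;> split <;> omega
  set Icom : Committee m k := comOf gI hgI.injective with hIdef
  set Acom : Committee m k := comOf gP hgP.injective with hAdef
  have hIcard : Icom.1.card = k := Icom.2
  have hAcard : Acom.1.card = k := Acom.2
  have hposI : ∀ t : Fin k, posAt Icom t = gI t := fun t => posAt_comOf hgI t
  have hposA : ∀ t : Fin k, posAt Acom t = gP t := fun t => posAt_comOf hgP t
  -- a permutation mapping `Icom` onto `Acom`
  have hcards : Icom.1.card = Acom.1.card := by rw [hIcard, hAcard]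
  set u₀ : Equiv.Perm (Fin m) := (Finset.equivOfCardEq hcards).extendSubtype with hu
  have himg : Icom.1.image u₀ = Acom.1 := by
    apply Finset.eq_of_subset_of_card_le
    · intro x hx
      obtain ⟨c, hc, rfl⟩ := Finset.mem_image.1 hx
      rw [hu]
      exact (Finset.equivOfCardEq hcards).extendSubtype_mem c hc
    · rw [Finset.card_image_of_injective _ u₀.injective, hIcard, hAcard]
  have hcpI : commPos u₀ Icom = Acom := Subtype.ext himg
  set T₀ : Committee m k := ⟨Icom.1.image u₀.symm, by
      rw [Finset.card_image_of_injective _ u₀.symm.injective]; exact hIcard⟩ with hT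
  have hcpT : commPos u₀ T₀ = Icom := by
    apply Subtype.ext
    show (Icom.1.image u₀.symm).image u₀ = Icom.1
    rw [Finset.image_image, Equiv.self_comp_symm, Finset.image_id]
  -- abbreviation for the committee scoring function
  set F : Committee m k → ℝ := fun S => ∑ t : Fin k, γ m k t (posAt S t) with hF
  have hFnonneg : ∀ T : Committee m k, 0 ≤ F T := by
    intro T
    rw [hF]
    exact Finset.sum_nonneg fun t _ => (hγ m k t).2 _
  have hterm_le : ∀ (T : Committee m k) (t : Fin k),
      γ m k t (posAt T t) ≤ γ m k t (posAt Icom t) := by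
    intro T t
    apply (hγ m k t).1
    rw [hposI t]
    rw [Fin.le_def]
    have := posAt_lower T t
    simp only [hgIdef]
    exact this
  have hFmax : ∀ T : Committee m k, F T ≤ F Icom := by
    intro T
    rw [hF]
    exact Finset.sum_le_sum fun t _ => hterm_le T t
  -- the election argument, for every number `N` of `u₀`-voters
  have hN : ∀ N : ℕ, (N : ℝ) * F Icom ≤ (N : ℝ) * F Acom + (k : ℝ) * F Icom := by
    intro N
    set w : Fin k → Equiv.Perm (Fin m) := fun j => Equiv.swap (gI j) 0 with hwdef
    set vt : Fin (N + k) → Equiv.Perm (Fin m) := fun i =>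
      if h : (i : ℕ) < N then u₀ else w ⟨(i : ℕ) - N, by have := i.isLt; omega⟩ with hvt
    set E : Election m := ⟨N + k, vt⟩ with hE
    have hvt1 : ∀ (i : Fin (N + k)), (i : ℕ) < N → vt i = u₀ := by
      intro i h
      rw [hvt]
      exact dif_pos h
    have hvt2 : ∀ (i : Fin (N + k)) (h : ¬ (i : ℕ) < N),
        vt i = w ⟨(i : ℕ) - N, by have := i.isLt; omega⟩ := by
      intro i h
      rw [hvt]
      exact dif_neg h
    have hswap : ∀ (j : Fin k) (x : Fin m), x = gI j → ((w j) x : ℕ) = 0 := by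
      intro j x hx
      rw [hx, hwdef]
      simp
    -- a winner exists
    obtain ⟨W, -, hWmax⟩ := Finset.exists_max_image Finset.univ (score F E)
      ⟨Icom, Finset.mem_univ _⟩
    have hWwin : W ∈ winners F E := fun T => hWmax T (Finset.mem_univ T)
    -- narrow-top conditions
    have hc1 : ∀ i : Fin E.n, ∃ c ∈ Icom.1, ((E.vote i) c : ℕ) = 0 := by
      intro i
      by_cases h : (i : ℕ) < N
      · have h0A : (0 : Fin m) ∈ Icom.1.image u₀ := by
          rw [himg]
          have h0 : gP ⟨0, hk⟩ = (0 : Fin m) := by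
            apply Fin.ext
            simp [hgPdef]
          rw [hAdef, ← h0]
          exact Finset.mem_image_of_mem _ (Finset.mem_univ _)
        obtain ⟨c, hc, hc0⟩ := Finset.mem_image.1 h0A
        refine ⟨c, hc, ?_⟩
        show ((vt i) c : ℕ) = 0
        rw [hvt1 i h, hc0]
        simp
      · have hin : (i : ℕ) < N + k := i.isLt
        refine ⟨gI ⟨(i : ℕ) - N, by omega⟩, ?_, ?_⟩
        · rw [hIdef]
          exact Finset.mem_image_of_mem _ (Finset.mem_univ _)
        · show ((vt i) _ : ℕ) = 0
          rw [hvt2 i h]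
          exact hswap _ _ rfl
    have hc2 : ∀ c ∈ Icom.1, ∃ i : Fin E.n, ((E.vote i) c : ℕ) = 0 := by
      intro c hc
      rw [hIdef] at hc
      have hc' : c ∈ Finset.univ.image gI := hc
      obtain ⟨j, -, rfl⟩ := Finset.mem_image.1 hc'
      have hj := j.isLt
      refine ⟨(⟨N + (j : ℕ), by omega⟩ : Fin (N + k)), ?_⟩
      show ((vt _) _ : ℕ) = 0
      rw [hvt2 _ (Nat.not_lt.mpr (Nat.le_add_right N (j : ℕ)))]
      apply hswap
      congr 1
      apply Fin.ext
      show (j : ℕ) = N + (j : ℕ) - N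
      omega
    -- `Icom` is the unique winner
    have hsub : Icom.1 ⊆ W.1 := hnt m k E Icom.1 (le_of_eq hIcard) hc1 hc2 W hWwin
    have hWI : W = Icom := by
      apply Subtype.ext
      exact (Finset.eq_of_subset_of_card_le hsub
        (le_of_eq (W.2.trans hIcard.symm))).symm
    rw [hWI] at hWwin
    -- score computations
    have hsplit : ∀ T : Committee m k, score F E T
        = ∑ i : Fin N, F (commPos (vt (Fin.castAdd k i)) T)
          + ∑ j : Fin k, F (commPos (vt (Fin.natAdd N j)) T) := by
      intro T
      show ∑ i : Fin (N + k), F (commPos (vt i) T) = _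
      exact Fin.sum_univ_add _
    have hcast : ∀ i : Fin N, vt (Fin.castAdd k i) = u₀ := by
      intro i
      apply hvt1
      simpa using i.isLt
    have hsI : score F E Icom ≤ (N : ℝ) * F Acom + (k : ℝ) * F Icom := by
      rw [hsplit Icom]
      have h1 : ∑ i : Fin N, F (commPos (vt (Fin.castAdd k i)) Icom)
          = (N : ℝ) * F Acom := by
        rw [Finset.sum_congr rfl (fun i _ => by rw [hcast i, hcpI]),
          Finset.sum_const, Finset.card_univ, Fintype.card_fin, nsmul_eq_mul]
      have h2 : ∑ j : Fin k, F (commPos (vt (Fin.natAdd N j)) Icom)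
          ≤ (k : ℝ) * F Icom := by
        calc ∑ j : Fin k, F (commPos (vt (Fin.natAdd N j)) Icom)
            ≤ ∑ _j : Fin k, F Icom := Finset.sum_le_sum fun j _ => hFmax _
          _ = (k : ℝ) * F Icom := by
              rw [Finset.sum_const, Finset.card_univ, Fintype.card_fin, nsmul_eq_mul]
      linarith
    have hsT : (N : ℝ) * F Icom ≤ score F E T₀ := by
      rw [hsplit T₀]
      have h1 : ∑ i : Fin N, F (commPos (vt (Fin.castAdd k i)) T₀)
          = (N : ℝ) * F Icom := by
        rw [Finset.sum_congr rfl (fun i _ => by rw [hcast i, hcpT]),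
          Finset.sum_const, Finset.card_univ, Fintype.card_fin, nsmul_eq_mul]
      have h2 : (0 : ℝ) ≤ ∑ j : Fin k, F (commPos (vt (Fin.natAdd N j)) T₀) :=
        Finset.sum_nonneg fun j _ => hFnonneg _
      linarith
    have := hWwin T₀
    linarith
  -- conclude `F Icom ≤ F Acom`
  have hle : F Icom ≤ F Acom := by
    by_contra hcon
    push_neg at hcon
    obtain ⟨N, hN'⟩ := exists_nat_gt (((k : ℝ) * F Icom) / (F Icom - F Acom))
    have hd : (0 : ℝ) < F Icom - F Acom := by linarith
    rw [div_lt_iff₀ hd] at hN'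
    have h2 := hN N
    nlinarith
  -- termwise equality
  have heq : ∑ t : Fin k, γ m k t (posAt Acom t) = ∑ t : Fin k, γ m k t (posAt Icom t) := by
    have h1 : F Acom = F Icom := le_antisymm (hFmax Acom) hle
    rw [hF] at h1
    exact h1
  have hall := (Finset.sum_eq_sum_iff_of_le (fun t _ => hterm_le Acom t)).1 heq s
    (Finset.mem_univ s)
  rw [hposA s, hposI s] at hall
  have h1 : gP s = p := by
    apply Fin.ext
    simp only [hgPdef]
    rw [if_neg (by omega)]
    omega
  have h2 : gI s = ⟨(s : ℕ), lt_of_lt_of_le s.isLt hkm⟩ := by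
    rw [hgIdef]
  rw [h1, h2] at hall
  exact hall

/-- a decomposable committee scoring rule that is narrow-top
consistent is representation-focused (up to a positive affine transformation,
its scoring function depends only on the best position of a committee member). -/
theorem decomposable_narrowtop_implies_repfocused
    (γ : ∀ m k, Fin k → Fin m → ℝ) (hγ : ∀ m k t, IsSWSF (γ m k t))
    (hnt : NarrowTopConsistent (fun m k S => ∑ t : Fin k, γ m k t (posAt S t))) :
    ∀ m k, ∀ hk : 0 < k, ∃ (a b : ℝ) (δ : Fin m → ℝ),
      0 < a ∧ IsSWSF δ ∧
      ∀ S : Committee m k,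
        a * (∑ t : Fin k, γ m k t (posAt S t)) + b = δ (posAt S ⟨0, hk⟩) := by
  intro m k hk
  by_cases hkm : k ≤ m
  · refine ⟨1, 0, fun i => γ m k ⟨0, hk⟩ i
        + ∑ t : Fin k, (if (t : ℕ) = 0 then 0
            else γ m k t ⟨(t : ℕ), lt_of_lt_of_le t.isLt hkm⟩),
      one_pos, ⟨?_, ?_⟩, ?_⟩
    · intro a b hab
      dsimp only
      exact add_le_add_left ((hγ m k ⟨0, hk⟩).1 hab) _
    · intro i
      have h1 := (hγ m k ⟨0, hk⟩).2 i
      have h2 : (0 : ℝ) ≤ ∑ t : Fin k, (if (t : ℕ) = 0 then 0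
          else γ m k t ⟨(t : ℕ), lt_of_lt_of_le t.isLt hkm⟩) := by
        refine Finset.sum_nonneg fun t _ => ?_
        split
        · exact le_refl 0
        · exact (hγ m k t).2 _
      positivity
    · intro S
      rw [one_mul, add_zero]
      have hterm : ∀ t : Fin k, γ m k t (posAt S t)
          = (if t = (⟨0, hk⟩ : Fin k) then γ m k ⟨0, hk⟩ (posAt S ⟨0, hk⟩) else 0)
            + (if (t : ℕ) = 0 then 0
                else γ m k t ⟨(t : ℕ), lt_of_lt_of_le t.isLt hkm⟩) := by
        intro t
        by_cases h0 : (t : ℕ) = 0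
        · have ht : t = ⟨0, hk⟩ := Fin.ext h0
          subst ht
          rw [if_pos rfl, if_pos h0, add_zero]
        · rw [if_neg (fun hc => h0 (by rw [hc])), if_neg h0, zero_add]
          exact gamma_const γ hγ hnt hk hkm t (Nat.pos_of_ne_zero h0) (posAt S t)
            (posAt_lower S t) (posAt_upper S t)
      rw [Finset.sum_congr rfl fun t _ => hterm t, Finset.sum_add_distrib,
        Finset.sum_ite_eq' Finset.univ (⟨0, hk⟩ : Fin k)
          (fun _ => γ m k ⟨0, hk⟩ (posAt S ⟨0, hk⟩)),
        if_pos (Finset.mem_univ _)]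
  · refine ⟨1, 0, fun _ => (0 : ℝ), one_pos, ⟨antitone_const, fun _ => le_refl 0⟩, ?_⟩
    intro S
    exfalso
    have h := Finset.card_le_univ S.1
    rw [S.2, Fintype.card_fin] at h
    exact hkm h
end

section
/- For a nontrivial committee scoring function f_{m,k} and any candidate c, in the election ζ(c) consisting of (m−1)! votes that all rank c first followed by every permutation of the remaining m−1 candidates, the winning size-k committees are exactly those containing c. -/
open Finset

section ZetaAux

variable {m k : ℕ}

private lemma zeta_forall₂_cons_erase :
    ∀ (l : List (Fin m)), l.Pairwise (· ≤ ·) → ∀ e ∈ l, ∀ a : Fin m, (∀ x ∈ l, a ≤ x) →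
      List.Forall₂ (· ≤ ·) (a :: l.erase e) l := by
  intro l
  induction l with
  | nil => intro _ e he; simp at he
  | cons x xs ih =>
    intro hs e he a ha
    by_cases hex : e = x
    · subst hex
      rw [List.erase_cons_head]
      exact List.Forall₂.cons (ha _ List.mem_cons_self) (List.forall₂_refl _)
    · have hex' : e ∈ xs := by
        rcases List.mem_cons.1 he with h | h
        · exact absurd h hex
        · exact h
      rw [List.erase_cons_tail (by simp only [beq_iff_eq]; exact fun h => hex h.symm)]
      exact List.Forall₂.cons (ha _ List.mem_cons_self)
        (ih hs.of_cons e hex' x (fun y hy => List.rel_of_pairwise_cons hs hy))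

private lemma zeta_sort_erase (Q : Finset (Fin m)) (q : Fin m) :
    (Q.erase q).sort (· ≤ ·) = (Q.sort (· ≤ ·)).erase q := by
  refine List.Perm.eq_of_pairwise' (Finset.pairwise_sort ..)
    (List.Pairwise.sublist List.erase_sublist (Finset.pairwise_sort ..)) ?_
  rw [← Multiset.coe_eq_coe, Finset.sort_eq, ← Multiset.coe_erase, Finset.sort_eq,
    Finset.erase_val]

private lemma zeta_dominates {z : Fin m} (hz0 : (z : ℕ) = 0) {Q : Finset (Fin m)} {q : Fin m}
    (hz : z ∉ Q) (hq : q ∈ Q) :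
    Dominates (insert z (Q.erase q)) Q := by
  have hzle : ∀ x : Fin m, z ≤ x := fun x => by
    rw [Fin.le_def, hz0]; exact Nat.zero_le _
  unfold Dominates
  rw [Finset.sort_insert _ (fun b _ => hzle b) (fun h => hz (Finset.mem_of_mem_erase h)),
    zeta_sort_erase]
  exact zeta_forall₂_cons_erase _ (Finset.pairwise_sort ..) q
    ((Finset.mem_sort _).2 hq) _ (fun x _ => hzle x)

private lemma zeta_card_insert_erase (hk : 0 < k) {Q : Finset (Fin m)} (hQ : Q.card = k)
    {q z : Fin m} (hq : q ∈ Q) (hz : z ∉ Q) : (insert z (Q.erase q)).card = k := by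
  rw [Finset.card_insert_of_notMem (fun h => hz (Finset.mem_of_mem_erase h)),
    Finset.card_erase_of_mem hq, hQ]
  omega

private lemma zeta_card_votes (c z : Fin m) :
    (Finset.univ.filter fun v : Equiv.Perm (Fin m) => v c = z).card = (m - 1).factorial := by
  classical
  rw [← Fintype.card_subtype]
  have e1 : {v : Equiv.Perm (Fin m) // v c = z} ≃ {v : Equiv.Perm (Fin m) // v c = c} :=
    { toFun := fun v => ⟨v.1.trans (Equiv.swap z c), by simp [v.2]⟩
      invFun := fun w => ⟨w.1.trans (Equiv.swap z c), by simp [w.2]⟩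
      left_inv := fun v => Subtype.ext (Equiv.ext fun x => by simp)
      right_inv := fun w => Subtype.ext (Equiv.ext fun x => by simp) }
  have e2 : {v : Equiv.Perm (Fin m) // v c = c} ≃ Equiv.Perm {x : Fin m // x ≠ c} := by
    refine (Equiv.subtypeEquivRight ?_).trans
      (Equiv.Perm.subtypeEquivSubtypePerm fun x : Fin m => x ≠ c).symm
    intro v
    constructor
    · intro h a ha
      rw [not_not.mp ha]
      exact h
    · intro h
      exact h c (not_not.mpr rfl)
  rw [Fintype.card_congr (e1.trans e2), Fintype.card_perm]
  congr 1
  have : Fintype.card {x : Fin m // x ≠ c} = m - 1 := by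
    rw [Fintype.card_subtype_compl, Fintype.card_subtype_eq, Fintype.card_fin]
  rw [this]

private lemma zeta_const (hk : 0 < k) (hkm : k < m) (f : Committee m k → ℝ) (z : Fin m)
    (hEq : ∀ (Q : Finset (Fin m)) (hQ : Q.card = k) (q : Fin m), z ∉ Q → q ∈ Q →
      ∀ h' : (insert z (Q.erase q)).card = k, f ⟨insert z (Q.erase q), h'⟩ = f ⟨Q, hQ⟩) :
    ∀ S T : Committee m k, f S = f T := by
  classical
  have fcongr : ∀ (X Y : Finset (Fin m)) (hX : X.card = k) (hY : Y.card = k), X = Y →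
      f ⟨X, hX⟩ = f ⟨Y, hY⟩ := by
    intro X Y hX hY h; subst h; rfl
  have move2 : ∀ (A : Finset (Fin m)) (hA : A.card = k) (b : Fin m), z ∈ A → b ∉ A → b ≠ z →
      ∀ h' : (insert b (A.erase z)).card = k, f ⟨insert b (A.erase z), h'⟩ = f ⟨A, hA⟩ := by
    intro A hA b hzA hbA hbz h'
    have hbz' : b ∉ A.erase z := fun h => hbA (Finset.mem_of_mem_erase h)
    have h1 : z ∉ insert b (A.erase z) := by
      intro h
      rcases Finset.mem_insert.1 h with h | h
      · exact hbz h.symm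
      · exact Finset.notMem_erase _ _ h
    have h2 : b ∈ insert b (A.erase z) := Finset.mem_insert_self _ _
    have h3 := hEq (insert b (A.erase z)) h' b h1 h2
      (by rw [Finset.erase_insert hbz', Finset.insert_erase hzA, hA])
    exact h3.symm.trans
      (fcongr _ _ _ _ (by rw [Finset.erase_insert hbz', Finset.insert_erase hzA]))
  have move3 : ∀ (A : Finset (Fin m)) (hA : A.card = k) (x y : Fin m), z ∉ A → x ∈ A → y ∉ A →
      y ≠ z → ∀ h' : (insert y (A.erase x)).card = k, f ⟨insert y (A.erase x), h'⟩ = f ⟨A, hA⟩ := by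
    intro A hA x y hzA hxA hyA hyz h'
    have hzx : z ∉ A.erase x := fun h => hzA (Finset.mem_of_mem_erase h)
    have hA1 : (insert z (A.erase x)).card = k := by
      rw [Finset.card_insert_of_notMem hzx, Finset.card_erase_of_mem hxA, hA]; omega
    have e1 : f ⟨insert z (A.erase x), hA1⟩ = f ⟨A, hA⟩ := hEq A hA x hzA hxA hA1
    have hzA1 : z ∈ insert z (A.erase x) := Finset.mem_insert_self _ _
    have hyA1 : y ∉ insert z (A.erase x) := by
      intro h
      rcases Finset.mem_insert.1 h with h | h
      · exact hyz h
      · exact hyA (Finset.mem_of_mem_erase h)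
    have h2 := move2 (insert z (A.erase x)) hA1 y hzA1 hyA1 hyz
      (by rw [Finset.erase_insert hzx]; exact h')
    refine Eq.trans ?_ (h2.trans e1)
    exact fcongr _ _ _ _ (by rw [Finset.erase_insert hzx])
  have claimA : ∀ (n : ℕ) (A B : Finset (Fin m)) (hA : A.card = k) (hB : B.card = k),
      z ∉ A → z ∉ B → (B \ A).card = n → f ⟨A, hA⟩ = f ⟨B, hB⟩ := by
    intro n
    induction n using Nat.strong_induction_on with
    | _ n ih =>
      intro A B hA hB hzA hzB hn
      by_cases hAB : A = B
      · exact fcongr _ _ _ _ hAB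
      · have hBA : (B \ A).Nonempty := by
          rw [Finset.sdiff_nonempty]
          intro hsub
          exact hAB (Finset.eq_of_subset_of_card_le hsub (by rw [hA, hB])).symm
        obtain ⟨y, hy⟩ := hBA
        have hyB : y ∈ B := (Finset.mem_sdiff.1 hy).1
        have hyA : y ∉ A := (Finset.mem_sdiff.1 hy).2
        have hABd : (A \ B).Nonempty := by
          rw [Finset.sdiff_nonempty]
          intro hsub
          exact hAB (Finset.eq_of_subset_of_card_le hsub (by rw [hA, hB]))
        obtain ⟨x, hx⟩ := hABd
        have hxA : x ∈ A := (Finset.mem_sdiff.1 hx).1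
        have hxB : x ∉ B := (Finset.mem_sdiff.1 hx).2
        have hyx : y ∉ A.erase x := fun h => hyA (Finset.mem_of_mem_erase h)
        have hA' : (insert y (A.erase x)).card = k := by
          rw [Finset.card_insert_of_notMem hyx, Finset.card_erase_of_mem hxA, hA]; omega
        have hyz : y ≠ z := fun h => hzB (h ▸ hyB)
        have h1 : f ⟨insert y (A.erase x), hA'⟩ = f ⟨A, hA⟩ := move3 A hA x y hzA hxA hyA hyz hA'
        have hzA' : z ∉ insert y (A.erase x) := by
          intro h
          rcases Finset.mem_insert.1 h with h | h
          · exact hyz h.symm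
          · exact hzA (Finset.mem_of_mem_erase h)
        have hdiff : B \ insert y (A.erase x) = (B \ A).erase y := by
          ext b
          by_cases hbx : b = x
          · subst hbx
            simp only [Finset.mem_sdiff, Finset.mem_erase, Finset.mem_insert]
            tauto
          · simp only [Finset.mem_sdiff, Finset.mem_erase, Finset.mem_insert]
            tauto
        have hnpos : 0 < n := hn ▸ Finset.card_pos.2 ⟨y, hy⟩
        have hcard : ((B \ A).erase y).card < n := by
          rw [Finset.card_erase_of_mem hy, hn]; omega
        have h2 : f ⟨insert y (A.erase x), hA'⟩ = f ⟨B, hB⟩ :=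
          ih _ hcard (insert y (A.erase x)) B hA' hB hzA' hzB (by rw [hdiff])
        exact h1.symm.trans h2
  have hnotall : ∀ A : Finset (Fin m), A.card = k → ∃ b, b ∉ A := by
    intro A hA
    by_contra h
    push_neg at h
    have : A = Finset.univ := Finset.eq_univ_iff_forall.2 h
    rw [this, Finset.card_univ, Fintype.card_fin] at hA
    omega
  have claimB : ∀ (A : Finset (Fin m)) (hA : A.card = k),
      ∃ (B : Finset (Fin m)) (hB : B.card = k), z ∉ B ∧ f ⟨A, hA⟩ = f ⟨B, hB⟩ := by
    intro A hA
    by_cases hzA : z ∈ A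
    · obtain ⟨b, hb⟩ := hnotall A hA
      have hbz : b ≠ z := fun h => hb (h ▸ hzA)
      have hbz' : b ∉ A.erase z := fun h => hb (Finset.mem_of_mem_erase h)
      have hB : (insert b (A.erase z)).card = k := by
        rw [Finset.card_insert_of_notMem hbz', Finset.card_erase_of_mem hzA, hA]; omega
      refine ⟨insert b (A.erase z), hB, ?_, (move2 A hA b hzA hb hbz hB).symm⟩
      intro h
      rcases Finset.mem_insert.1 h with h | h
      · exact hbz h.symm
      · exact Finset.notMem_erase _ _ h
    · exact ⟨A, hA, hzA, rfl⟩
  intro S T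
  obtain ⟨A, hA, hzA, hSA⟩ := claimB S.1 S.2
  obtain ⟨B, hB, hzB, hTB⟩ := claimB T.1 T.2
  have hmid : f ⟨A, hA⟩ = f ⟨B, hB⟩ := claimA _ A B hA hB hzA hzB rfl
  calc f S = f ⟨S.1, S.2⟩ := rfl
    _ = f ⟨A, hA⟩ := hSA
    _ = f ⟨B, hB⟩ := hmid
    _ = f ⟨T.1, T.2⟩ := hTB.symm
    _ = f T := rfl

end ZetaAux

/-- in the election `ζ(c)` — `(m-1)!` distinct votes all ranking
`c` first — the winning size-`k` committees under a nontrivial committee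
scoring function are exactly the committees containing `c`. -/
theorem zeta_single_candidate_winners
    (m k : ℕ) (hk : 0 < k) (hkm : k ≤ m)
    (f : Committee m k → ℝ) (hf : IsCSF f) (hnc : NonConstant f)
    (c : Fin m) (E : Election m)
    (hn : E.n = (m - 1).factorial)
    (hc : ∀ i : Fin E.n, (E.vote i c : ℕ) = 0)
    (hinj : Function.Injective E.vote) :
    ∀ W : Committee m k, W ∈ winners f E ↔ c ∈ W.1 := by
  classical
  have hm : 0 < m := lt_of_lt_of_le hk hkm
  obtain ⟨z, hz1⟩ : ∃ z : Fin m, (z : ℕ) = 0 := ⟨⟨0, hm⟩, rfl⟩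
  have hc0 : ∀ i, E.vote i c = z := fun i => Fin.ext (by rw [hc i, hz1])
  rcases eq_or_lt_of_le hkm with hkeq | hklt
  · -- k = m : `NonConstant` is contradictory
    exfalso
    obtain ⟨S, T, hST⟩ := hnc
    have hS : S.1 = Finset.univ :=
      Finset.eq_univ_of_card _ (by rw [S.2, hkeq, Fintype.card_fin])
    have hT : T.1 = Finset.univ :=
      Finset.eq_univ_of_card _ (by rw [T.2, hkeq, Fintype.card_fin])
    exact hST (congrArg f (Subtype.ext (hS.trans hT.symm)))
  set V : Finset (Equiv.Perm (Fin m)) := Finset.univ.filter (fun v => v c = z) with hV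
  have hscore : ∀ S : Committee m k, score f E S = ∑ v ∈ V, f (commPos v S) := by
    intro S
    have himg : (Finset.univ : Finset (Fin E.n)).image E.vote = V := by
      apply Finset.eq_of_subset_of_card_le
      · intro v hv
        obtain ⟨i, _, rfl⟩ := Finset.mem_image.1 hv
        simp [hV, hc0 i]
      · rw [Finset.card_image_of_injective _ hinj, Finset.card_univ, Fintype.card_fin, hV,
          zeta_card_votes c z, hn]
    rw [← himg, Finset.sum_image (fun i _ j _ h => hinj h)]
    simp only [score]
  have hsym : ∀ σ : Equiv.Perm (Fin m), σ c = c → ∀ S : Committee m k,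
      score f E (commPos σ S) = score f E S := by
    intro σ hσ S
    rw [hscore, hscore]
    refine Finset.sum_equiv ⟨fun v => σ.trans v, fun v => σ.symm.trans v,
      fun v => by ext x; simp, fun v => by ext x; simp⟩ ?_ ?_
    · intro v
      simp [hV, Equiv.trans_apply, hσ]
    · intro v _
      refine congrArg f (Subtype.ext ?_)
      show (S.1.image σ).image v = S.1.image (σ.trans v)
      rw [Finset.image_image, Equiv.coe_trans]
  have hperm_ex : ∀ A B : Finset (Fin m), c ∉ A → c ∉ B → A.card = B.card →
      ∃ σ : Equiv.Perm (Fin m), σ c = c ∧ A.image σ = B := by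
    intro A B hcA hcB hAB
    have hcard1 : Fintype.card {x // x ∈ A} = Fintype.card {x // x ∈ B} := by
      rw [Fintype.card_coe, Fintype.card_coe, hAB]
    have hcard2 : Fintype.card {x : Fin m // ¬ x ∈ A} = Fintype.card {x : Fin m // ¬ x ∈ B} := by
      rw [Fintype.card_subtype_compl, Fintype.card_subtype_compl, hcard1]
    let eA := Fintype.equivOfCardEq hcard1
    let eC := Fintype.equivOfCardEq hcard2
    let τ : Equiv.Perm (Fin m) :=
      (Equiv.sumCompl (· ∈ A)).symm.trans ((eA.sumCongr eC).trans (Equiv.sumCompl (· ∈ B)))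
    have hτmem : ∀ x, x ∈ A → τ x ∈ B := by
      intro x hx
      show (Equiv.sumCompl (· ∈ B)) ((eA.sumCongr eC) ((Equiv.sumCompl (· ∈ A)).symm x)) ∈ B
      rw [Equiv.sumCompl_symm_apply_of_pos hx]
      simp only [Equiv.sumCongr_apply, Sum.map_inl, Equiv.sumCompl_apply_inl]
      exact (eA ⟨x, hx⟩).2
    have hτnot : ∀ x, x ∉ A → τ x ∉ B := by
      intro x hx
      show (Equiv.sumCompl (· ∈ B)) ((eA.sumCongr eC) ((Equiv.sumCompl (· ∈ A)).symm x)) ∉ B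
      rw [Equiv.sumCompl_symm_apply_of_neg hx]
      simp only [Equiv.sumCongr_apply, Sum.map_inr, Equiv.sumCompl_apply_inr]
      exact (eC ⟨x, hx⟩).2
    have himg : A.image τ = B := by
      apply Finset.eq_of_subset_of_card_le
      · intro y hy
        obtain ⟨x, hx, rfl⟩ := Finset.mem_image.1 hy
        exact hτmem x hx
      · rw [Finset.card_image_of_injective _ τ.injective, hAB]
    refine ⟨τ.trans (Equiv.swap (τ c) c), Equiv.swap_apply_left _ _, ?_⟩
    have : A.image ⇑(τ.trans (Equiv.swap (τ c) c)) = (A.image τ).image (Equiv.swap (τ c) c) := by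
      rw [Finset.image_image]
      rfl
    rw [this, himg]
    have hstep : ∀ y ∈ B, Equiv.swap (τ c) c y = y := by
      intro y hy
      refine Equiv.swap_apply_of_ne_of_ne ?_ ?_
      · intro h
        exact (hτnot c hcA) (h ▸ hy)
      · intro h
        exact hcB (h ▸ hy)
    calc (B.image (Equiv.swap (τ c) c)) = B.image id := Finset.image_congr (fun y hy => hstep y hy)
      _ = B := Finset.image_id
  have hmem_eq : ∀ S T : Committee m k, c ∈ S.1 → c ∈ T.1 → score f E S = score f E T := by
    intro S T hS hT
    obtain ⟨σ, hσc, hσ⟩ := hperm_ex (S.1.erase c) (T.1.erase c)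
      (Finset.notMem_erase _ _) (Finset.notMem_erase _ _)
      (by rw [Finset.card_erase_of_mem hS, Finset.card_erase_of_mem hT, S.2, T.2])
    have hT' : commPos σ S = T := by
      refine Subtype.ext ?_
      show S.1.image σ = T.1
      conv_lhs => rw [← Finset.insert_erase hS]
      rw [Finset.image_insert, hσc, hσ, Finset.insert_erase hT]
    rw [← hT', hsym σ hσc]
  have hnot_eq : ∀ S T : Committee m k, c ∉ S.1 → c ∉ T.1 → score f E S = score f E T := by
    intro S T hS hT
    obtain ⟨σ, hσc, hσ⟩ := hperm_ex S.1 T.1 hS hT (by rw [S.2, T.2])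
    have hT' : commPos σ S = T := Subtype.ext hσ
    rw [← hT', hsym σ hσc]
  have hkey : ∃ (Q : Finset (Fin m)) (hQ : Q.card = k) (q : Fin m) (hzQ : z ∉ Q) (hq : q ∈ Q),
      f ⟨Q, hQ⟩ < f ⟨insert z (Q.erase q), zeta_card_insert_erase hk hQ hq hzQ⟩ := by
    by_contra hcon
    push_neg at hcon
    have hEq : ∀ (Q : Finset (Fin m)) (hQ : Q.card = k) (q : Fin m), z ∉ Q → q ∈ Q →
        ∀ h' : (insert z (Q.erase q)).card = k, f ⟨insert z (Q.erase q), h'⟩ = f ⟨Q, hQ⟩ :=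
      fun Q hQ q hzQ hq h' =>
        le_antisymm (hcon Q hQ q hzQ hq) (hf.mono _ ⟨Q, hQ⟩ (zeta_dominates hz1 hzQ hq))
    obtain ⟨S, T, hST⟩ := hnc
    exact hST (zeta_const hk hklt f z hEq S T)
  obtain ⟨Q, hQ, q, hzQ, hq, hlt⟩ := hkey
  set v0 : Equiv.Perm (Fin m) := Equiv.swap c z with hv0
  have hv0c : v0 c = z := Equiv.swap_apply_left c z
  set S0 : Finset (Fin m) := Q.image v0.symm with hS0def
  have hS0card : S0.card = k := by
    rw [hS0def, Finset.card_image_of_injective _ v0.symm.injective, hQ]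
  have hcS0 : c ∉ S0 := by
    intro h
    obtain ⟨x, hx, hxc⟩ := Finset.mem_image.1 h
    apply hzQ
    have : x = v0 c := by rw [← hxc, Equiv.apply_symm_apply]
    rwa [this, hv0c] at hx
  set a0 : Fin m := v0.symm q with ha0def
  have ha0 : a0 ∈ S0 := Finset.mem_image_of_mem _ hq
  set W1 : Finset (Fin m) := insert c (S0.erase a0) with hW1def
  have hW1card : W1.card = k := zeta_card_insert_erase hk hS0card ha0 hcS0
  have hcW1 : c ∈ W1 := Finset.mem_insert_self _ _
  have hS0img : S0.image v0 = Q := by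
    rw [hS0def, Finset.image_image]
    have : ⇑v0 ∘ ⇑v0.symm = id := Equiv.self_comp_symm v0
    rw [this, Finset.image_id]
  have hWpos : ∀ v : Equiv.Perm (Fin m), v c = z →
      (commPos v ⟨W1, hW1card⟩).1 = insert z ((S0.image v).erase (v a0)) := by
    intro v hvc
    show W1.image v = _
    rw [hW1def, Finset.image_insert, Finset.image_erase v.injective, hvc]
  have hznot : ∀ v : Equiv.Perm (Fin m), v c = z → z ∉ S0.image v := by
    intro v hvc h
    obtain ⟨x, hx, hxz⟩ := Finset.mem_image.1 h
    have : x = c := v.injective (hxz.trans hvc.symm)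
    exact hcS0 (this ▸ hx)
  have hle : ∀ v ∈ V, f (commPos v ⟨S0, hS0card⟩) ≤ f (commPos v ⟨W1, hW1card⟩) := by
    intro v hv
    have hvc : v c = z := by
      have := Finset.mem_filter.1 (hV ▸ hv)
      exact this.2
    apply hf.mono
    have h1 : (commPos v ⟨S0, hS0card⟩).1 = S0.image v := rfl
    rw [h1, hWpos v hvc]
    exact zeta_dominates hz1 (hznot v hvc) (Finset.mem_image_of_mem _ ha0)
  have hv0V : v0 ∈ V := by simp [hV, hv0c]
  have hstrict : f (commPos v0 ⟨S0, hS0card⟩) < f (commPos v0 ⟨W1, hW1card⟩) := by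
    have h1 : commPos v0 ⟨S0, hS0card⟩ = ⟨Q, hQ⟩ := Subtype.ext hS0img
    have h2 : commPos v0 ⟨W1, hW1card⟩ =
        ⟨insert z (Q.erase q), zeta_card_insert_erase hk hQ hq hzQ⟩ := by
      refine Subtype.ext ?_
      rw [hWpos v0 hv0c, hS0img]
      have : v0 a0 = q := by rw [ha0def, Equiv.apply_symm_apply]
      rw [this]
    rw [h1, h2]
    exact hlt
  have hslt : score f E ⟨S0, hS0card⟩ < score f E ⟨W1, hW1card⟩ := by
    rw [hscore, hscore]
    exact Finset.sum_lt_sum hle ⟨v0, hv0V, hstrict⟩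
  intro W
  constructor
  · intro hw
    by_contra hcW
    have h1 : score f E W = score f E ⟨S0, hS0card⟩ := hnot_eq _ _ hcW hcS0
    have h2 : score f E ⟨W1, hW1card⟩ ≤ score f E W := hw ⟨W1, hW1card⟩
    rw [h1] at h2
    exact absurd (lt_of_lt_of_le hslt h2) (lt_irrefl _)
  · intro hcW T
    by_cases hcT : c ∈ T.1
    · exact le_of_eq (hmem_eq T W hcT hcW)
    · calc score f E T = score f E ⟨S0, hS0card⟩ := hnot_eq _ _ hcT hcS0
        _ ≤ score f E ⟨W1, hW1card⟩ := le_of_lt hslt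
        _ = score f E W := hmem_eq ⟨W1, hW1card⟩ W hcW1 hcW
end

section
/- For a nontrivial committee scoring function f_{m,k} and a subset S of the candidate set, consider the election ζ(S) formed by concatenating ζ(c) for all c ∈ S (where ζ(c) has one vote ranking c first followed by each permutation of the rest). If |S| ≥ k, the winning size-k committees are exactly the subsets of S; if |S| < k, they are exactly the size-k committees containing S. -/
open Finset

section ZetaSetAux

open List in
private lemma forall2_cons_erase' {α : Type*} [LinearOrder α] [DecidableEq α] :
    ∀ (l : List α) (b d : α), l.Pairwise (· ≤ ·) → (∀ x ∈ l, b ≤ x) → d ∈ l →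
      List.Forall₂ (· ≤ ·) (b :: l.erase d) l := by
  intro l
  induction l with
  | nil => intro b d _ _ h; simp at h
  | cons a t ih =>
    intro b d hs hb hd
    rcases eq_or_ne d a with rfl | hne
    · rw [List.erase_cons_head]
      exact List.Forall₂.cons (hb _ (by simp)) (List.forall₂_refl _)
    · rw [List.erase_cons_tail (by simp [hne.symm])]
      have hd' : d ∈ t := List.mem_of_ne_of_mem hne hd
      refine List.Forall₂.cons (hb _ (by simp)) ?_
      exact ih a d hs.of_cons (fun x hx => (List.pairwise_cons.mp hs).1 x hx) hd'

private lemma dom_insert_bot {m : ℕ} (D : Finset (Fin m)) (b d : Fin m)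
    (hb : b ∉ D) (hball : ∀ x, b ≤ x) (hd : d ∈ D) :
    Dominates (insert b (D.erase d)) D := by
  have hsort : (insert b (D.erase d)).sort (· ≤ ·) = b :: (D.sort (· ≤ ·)).erase d := by
    refine (fun h1 h2 h3 => List.Perm.eq_of_pairwise' (r := (· ≤ ·)) h2 h3 h1) ?_ ?_ ?_
    · refine (Finset.sort_perm_toList _ _).trans ?_
      refine (Finset.toList_insert (by simp [hb])).trans ?_
      refine List.Perm.cons _ ?_
      have h1 : ((D.erase d).toList : Multiset (Fin m)) =
          (((D.sort (· ≤ ·)).erase d : List (Fin m)) : Multiset (Fin m)) := by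
        rw [Finset.coe_toList, Finset.erase_val, ← Multiset.coe_erase]
        congr 1
        rw [← Finset.coe_toList]
        exact Multiset.coe_eq_coe.mpr ((Finset.sort_perm_toList _ _).symm)
      exact Multiset.coe_eq_coe.mp h1
    · exact Finset.pairwise_sort _ _
    · exact List.pairwise_cons.mpr ⟨fun x _ => hball x, (Finset.pairwise_sort D (· ≤ ·)).erase _⟩
  rw [Dominates, hsort]
  exact forall2_cons_erase' _ b d (Finset.pairwise_sort _ _)
    (fun x _ => hball x) (by rw [Finset.mem_sort]; exact hd)

private lemma exists_perm_image {α : Type*} [Fintype α] [DecidableEq α] (X Y : Finset α)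
    (h : X.card = Y.card) : ∃ σ : Equiv.Perm α, X.image σ = Y := by
  have hc : Xᶜ.card = Yᶜ.card := by
    rw [Finset.card_compl, Finset.card_compl, h]
  let e₁ : {x // x ∈ X} ≃ {x // x ∈ Y} := Finset.equivOfCardEq h
  let e₂ : {x // ¬ x ∈ X} ≃ {x // ¬ x ∈ Y} :=
    ((Equiv.subtypeEquivRight (fun x => (Finset.mem_compl (s := X)).symm)).trans
      (Finset.equivOfCardEq hc)).trans
      (Equiv.subtypeEquivRight (fun x => Finset.mem_compl (s := Y)))
  let σ : Equiv.Perm α :=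
    ((Equiv.sumCompl (· ∈ X)).symm.trans (e₁.sumCongr e₂)).trans (Equiv.sumCompl (· ∈ Y))
  refine ⟨σ, ?_⟩
  have hsub : X.image σ ⊆ Y := by
    intro y hy
    rw [Finset.mem_image] at hy
    obtain ⟨x, hx, rfl⟩ := hy
    show ((Equiv.sumCompl (· ∈ Y)) ((e₁.sumCongr e₂) ((Equiv.sumCompl (· ∈ X)).symm x))) ∈ Y
    rw [Equiv.sumCompl_symm_apply_of_pos (p := (· ∈ X)) hx]
    simp only [Equiv.sumCongr_apply, Sum.map_inl, Equiv.sumCompl_apply_inl]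
    exact (e₁ ⟨x, hx⟩).2
  refine Finset.eq_of_subset_of_card_le hsub ?_
  rw [Finset.card_image_of_injective _ σ.injective, h]

private lemma exists_perm_image_pt {α : Type*} [Fintype α] [DecidableEq α] (X Y : Finset α)
    (h : X.card = Y.card) (c c' : α) (hm : c ∈ X ↔ c' ∈ Y) :
    ∃ σ : Equiv.Perm α, σ c = c' ∧ X.image σ = Y := by
  classical
  set τ := Equiv.swap c c' with hτ
  set X₁ := X.image τ with hX₁
  have hX₁c : c' ∈ X₁ ↔ c' ∈ Y := by
    constructor
    · intro hc'
      rw [hX₁, Finset.mem_image] at hc'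
      obtain ⟨x, hx, hxe⟩ := hc'
      have : x = c := by
        have := τ.injective (a₁ := x) (a₂ := c)
        apply this; rw [hxe, hτ]; simp [Equiv.swap_apply_left]
      exact hm.mp (this ▸ hx)
    · intro hc'
      have : c ∈ X := hm.mpr hc'
      rw [hX₁, Finset.mem_image]
      exact ⟨c, this, by rw [hτ]; simp⟩
  let p : α → Prop := fun x => x ≠ c'
  let X' : Finset {x // p x} := X₁.subtype p
  let Y' : Finset {x // p x} := Y.subtype p
  have hcard' : X'.card = Y'.card := by
    have h1 : X₁.card = X.card := Finset.card_image_of_injective _ τ.injective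
    have h2 : ∀ (Z : Finset α), (Z.subtype p).card = (Z.filter p).card := by
      intro Z; exact Finset.card_subtype p Z
    by_cases hc' : c' ∈ Y
    · have hc1 : c' ∈ X₁ := hX₁c.mpr hc'
      have : (X₁.filter p).card + 1 = X₁.card := by
        have := Finset.card_filter_add_card_filter_not (s := X₁) (p := p)
        have hxne : (X₁.filter (fun x => ¬ p x)) = {c'} := by
          ext x; simp [p, Finset.mem_filter]
          intro h; subst h; exact hc1
        rw [hxne] at this; simpa using this
      have hy : (Y.filter p).card + 1 = Y.card := by
        have := Finset.card_filter_add_card_filter_not (s := Y) (p := p)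
        have hxne : (Y.filter (fun x => ¬ p x)) = {c'} := by
          ext x; simp [p, Finset.mem_filter]
          intro h; subst h; exact hc'
        rw [hxne] at this; simpa using this
      rw [h2, h2]; omega
    · have hc1 : c' ∉ X₁ := fun hh => hc' (hX₁c.mp hh)
      have hx : X₁.filter p = X₁ := Finset.filter_true_of_mem (fun x hx => fun he => hc1 (he ▸ hx))
      have hyy : Y.filter p = Y := Finset.filter_true_of_mem (fun x hx => fun he => hc' (he ▸ hx))
      rw [h2, h2, hx, hyy, h1, h]
  obtain ⟨ρ, hρ⟩ := exists_perm_image X' Y' hcard'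
  let σ₂ : Equiv.Perm α := Equiv.Perm.ofSubtype ρ
  refine ⟨τ.trans σ₂, ?_, ?_⟩
  · show σ₂ (τ c) = c'
    rw [hτ]
    have : τ c = c' := Equiv.swap_apply_left c c'
    rw [this]
    exact Equiv.Perm.ofSubtype_apply_of_not_mem ρ (by simp [p])
  · have himg : X.image (τ.trans σ₂) = X₁.image σ₂ := by
      rw [hX₁, Finset.image_image]; rfl
    rw [himg]
    have hsub : X₁.image σ₂ ⊆ Y := by
      intro y hy
      rw [Finset.mem_image] at hy
      obtain ⟨x, hx, rfl⟩ := hy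
      by_cases hxc : x = c'
      · subst hxc
        rw [Equiv.Perm.ofSubtype_apply_of_not_mem ρ (by simp [p])]
        exact hX₁c.mp hx
      · rw [Equiv.Perm.ofSubtype_apply_of_mem ρ (show p x from hxc)]
        have : (⟨x, hxc⟩ : {x // p x}) ∈ X' := by
          simp [X', Finset.mem_subtype]; exact hx
        have : ρ ⟨x, hxc⟩ ∈ Y' := hρ ▸ Finset.mem_image_of_mem _ this
        simpa [Y', Finset.mem_subtype] using this
    refine Finset.eq_of_subset_of_card_le hsub ?_
    rw [Finset.card_image_of_injective _ σ₂.injective,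
      Finset.card_image_of_injective _ τ.injective, h]

noncomputable def Gscore {m k : ℕ} (f : Committee m k → ℝ) (z0 : Fin m)
    (W : Committee m k) (c : Fin m) : ℝ :=
  ∑ w ∈ Finset.univ.filter (fun w : Equiv.Perm (Fin m) => w c = z0),
    f (commPos w W)

private lemma Gscore_eq {m k : ℕ} (f : Committee m k → ℝ) (z0 : Fin m)
    (W W' : Committee m k) (c c' : Fin m) (hm : c ∈ W.1 ↔ c' ∈ W'.1) :
    Gscore f z0 W c = Gscore f z0 W' c' := by
  obtain ⟨σ, hσc, hσW⟩ := exists_perm_image_pt W.1 W'.1 (W.2.trans W'.2.symm) c c' hm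
  unfold Gscore
  refine Finset.sum_nbij' (fun w => σ.symm.trans w) (fun w => σ.trans w) ?_ ?_ ?_ ?_ ?_
  · intro w hw
    simp only [Finset.mem_filter, Finset.mem_univ, true_and] at hw ⊢
    show w (σ.symm c') = z0
    rw [show σ.symm c' = c from by rw [← hσc, Equiv.symm_apply_apply], hw]
  · intro w hw
    simp only [Finset.mem_filter, Finset.mem_univ, true_and] at hw ⊢
    show w (σ c) = z0
    rw [hσc, hw]
  · intro w _; ext x; simp [Equiv.trans_apply]
  · intro w _; ext x; simp [Equiv.trans_apply]
  · intro w hw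
    congr 1
    apply Subtype.ext
    show W.1.image w = W'.1.image (σ.symm.trans w)
    rw [← hσW, Finset.image_image]
    apply Finset.image_congr
    intro x _
    simp [Equiv.trans_apply]

private lemma card_insert_erase {m : ℕ} {D : Finset (Fin m)} {b d : Fin m}
    (hb : b ∉ D) (hd : d ∈ D) :
    (insert b (D.erase d)).card = D.card := by
  rw [Finset.card_insert_of_notMem (fun h => hb (Finset.mem_of_mem_erase h)),
    Finset.card_erase_of_mem hd]
  have := Finset.card_pos.mpr ⟨d, hd⟩
  omega

private lemma k_lt_m {m k : ℕ} (f : Committee m k → ℝ) (hnc : NonConstant f) (hkm : k ≤ m) :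
    k < m := by
  rcases lt_or_eq_of_le hkm with h | h
  · exact h
  · exfalso
    obtain ⟨A, B, hAB⟩ := hnc
    apply hAB
    congr 1
    apply Subtype.ext
    have hA : A.1 = Finset.univ := Finset.eq_univ_of_card _ (by rw [A.2, h]; simp)
    have hB : B.1 = Finset.univ := Finset.eq_univ_of_card _ (by rw [B.2, h]; simp)
    rw [hA, hB]

def Hstar {m k : ℕ} (f : Committee m k → ℝ) (z0 : Fin m) : Prop :=
  ∀ (C D : Committee m k), z0 ∉ D.1 → ∀ d ∈ D.1, C.1 = insert z0 (D.1.erase d) → f C = f D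

private lemma connect {m k : ℕ} (f : Committee m k → ℝ) (z0 : Fin m) (hst : Hstar f z0) :
    ∀ (n : ℕ) (C D : Committee m k), z0 ∉ C.1 → z0 ∉ D.1 → (C.1 \ D.1).card ≤ n →
      f C = f D := by
  intro n
  induction n with
  | zero =>
    intro C D _ _ hcard
    have h0 : C.1 \ D.1 = ∅ := Finset.card_eq_zero.mp (Nat.le_zero.mp hcard)
    have hsub : C.1 ⊆ D.1 := by
      intro x hx
      by_contra hxd
      exact absurd (Finset.mem_sdiff.mpr ⟨hx, hxd⟩) (by simp [h0])
    have : C.1 = D.1 := Finset.eq_of_subset_of_card_le hsub (by rw [C.2, D.2])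
    congr 1; exact Subtype.ext this
  | succ n ih =>
    intro C D hzC hzD hcard
    by_cases hempty : C.1 \ D.1 = ∅
    · exact ih C D hzC hzD (by simp [hempty])
    · obtain ⟨d, hd⟩ := Finset.nonempty_of_ne_empty hempty
      rw [Finset.mem_sdiff] at hd
      have hDC : (D.1 \ C.1).Nonempty := by
        rw [← Finset.card_pos, ← Finset.card_sdiff_comm (by rw [C.2, D.2]), Finset.card_pos]
        exact ⟨d, Finset.mem_sdiff.mpr hd⟩
      obtain ⟨e, he⟩ := hDC
      rw [Finset.mem_sdiff] at he
      have heC : e ∉ C.1.erase d := fun h => he.2 (Finset.mem_of_mem_erase h)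
      have hC2card : (insert e (C.1.erase d)).card = k := by
        rw [card_insert_erase he.2 hd.1]; exact C.2
      set C₂ : Committee m k := ⟨insert e (C.1.erase d), hC2card⟩ with hC₂
      have hzC₂ : z0 ∉ C₂.1 := by
        simp only [hC₂, Finset.mem_insert]
        rintro (h | h)
        · exact hzD (h ▸ he.1)
        · exact hzC (Finset.mem_of_mem_erase h)
      have hmid_card : (insert z0 (C.1.erase d)).card = k := by
        rw [card_insert_erase hzC hd.1]; exact C.2
      set M : Committee m k := ⟨insert z0 (C.1.erase d), hmid_card⟩ with hM
      have h1 : f M = f C := hst M C hzC d hd.1 rfl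
      have h2 : f M = f C₂ := by
        refine hst M C₂ hzC₂ e (by simp [hC₂]) ?_
        show insert z0 (C.1.erase d) = insert z0 ((insert e (C.1.erase d)).erase e)
        rw [Finset.erase_insert heC]
      have hstep : f C = f C₂ := h1 ▸ h2
      rw [hstep]
      refine ih C₂ D hzC₂ hzD ?_
      have hsd : C₂.1 \ D.1 = (C.1 \ D.1).erase d := by
        ext x
        simp only [hC₂, Finset.mem_sdiff, Finset.mem_insert, Finset.mem_erase]
        constructor
        · rintro ⟨h | h, hxD⟩
          · exact absurd (h ▸ he.1) hxD
          · exact ⟨h.1, h.2, hxD⟩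
        · rintro ⟨hxd, hxC, hxD⟩
          exact ⟨Or.inr ⟨hxd, hxC⟩, hxD⟩
      rw [hsd]
      have : d ∈ C.1 \ D.1 := Finset.mem_sdiff.mpr hd
      rw [Finset.card_erase_of_mem this]
      have := Finset.card_pos.mpr ⟨d, this⟩
      omega

private lemma const_of_hstar {m k : ℕ} (f : Committee m k → ℝ) (z0 : Fin m)
    (hst : Hstar f z0) (hkm : k < m) :
    ∀ C D : Committee m k, f C = f D := by
  have hred : ∀ C : Committee m k, z0 ∈ C.1 → ∃ D : Committee m k, z0 ∉ D.1 ∧ f C = f D := by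
    intro C hzC
    have : (C.1ᶜ).Nonempty := by
      rw [← Finset.card_pos, Finset.card_compl, C.2]
      simp; omega
    obtain ⟨d, hd⟩ := this
    rw [Finset.mem_compl] at hd
    have hdz : d ≠ z0 := fun h => hd (h ▸ hzC)
    have hDcard : (insert d (C.1.erase z0)).card = k := by
      rw [card_insert_erase hd hzC]; exact C.2
    refine ⟨⟨insert d (C.1.erase z0), hDcard⟩, ?_, ?_⟩
    · simp only [Finset.mem_insert]
      rintro (h | h)
      · exact hdz h.symm
      · exact absurd (Finset.mem_of_mem_erase h) (fun _ => (Finset.notMem_erase z0 C.1) h)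
    · refine hst C _ ?_ d (by simp) ?_
      · simp only [Finset.mem_insert]
        rintro (h | h)
        · exact hdz h.symm
        · exact Finset.notMem_erase z0 C.1 h
      · show C.1 = insert z0 ((insert d (C.1.erase z0)).erase d)
        rw [Finset.erase_insert (fun h => hd (Finset.mem_of_mem_erase h)),
          Finset.insert_erase hzC]
  intro C D
  have key : ∀ C D : Committee m k, z0 ∉ C.1 → z0 ∉ D.1 → f C = f D := fun C D h1 h2 =>
    connect f z0 hst ((C.1 \ D.1).card) C D h1 h2 le_rfl
  by_cases hC : z0 ∈ C.1 <;> by_cases hD : z0 ∈ D.1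
  · obtain ⟨C', hC', e1⟩ := hred C hC
    obtain ⟨D', hD', e2⟩ := hred D hD
    rw [e1, e2]; exact key C' D' hC' hD'
  · obtain ⟨C', hC', e1⟩ := hred C hC
    rw [e1]; exact key C' D hC' hD
  · obtain ⟨D', hD', e2⟩ := hred D hD
    rw [e2]; exact key C D' hC hD'
  · exact key C D hC hD

private lemma exists_strict {m k : ℕ} (f : Committee m k → ℝ) (z0 : Fin m)
    (hf : IsCSF f) (hnc : NonConstant f) (hz0 : ∀ x, z0 ≤ x) (hkm : k < m) :
    ∃ D : Committee m k, z0 ∉ D.1 ∧ ∃ d ∈ D.1,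
      ∀ (C : Committee m k), C.1 = insert z0 (D.1.erase d) → f D < f C := by
  by_contra hcon
  push_neg at hcon
  have hst : Hstar f z0 := by
    intro C D hzD d hd hC
    obtain ⟨C', hC', hlt⟩ := hcon D hzD d hd
    have hge : f D ≤ f C := by
      apply hf.mono
      rw [hC]
      exact dom_insert_bot D.1 z0 d hzD hz0 hd
    have : C = C' := Subtype.ext (hC.trans hC'.symm)
    rw [this]
    exact le_antisymm (this ▸ hlt) (this ▸ hge)
  obtain ⟨A, B, hAB⟩ := hnc
  exact hAB (const_of_hstar f z0 hst hkm A B)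

private lemma Gscore_lt {m k : ℕ} (f : Committee m k → ℝ) (z0 : Fin m)
    (hf : IsCSF f) (hnc : NonConstant f) (hz0 : ∀ x, z0 ≤ x)
    (hk : 0 < k) (hkm : k < m)
    (A B : Committee m k) (c c' : Fin m) (hcA : c ∈ A.1) (hcB : c' ∉ B.1) :
    Gscore f z0 B c' < Gscore f z0 A c := by
  obtain ⟨D, hzD, d, hd, hstrict⟩ := exists_strict f z0 hf hnc hz0 hkm
  obtain ⟨b, hb⟩ := Finset.card_pos.mp (by rw [B.2]; exact hk)
  have hA'card : (insert c' (B.1.erase b)).card = k := by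
    rw [card_insert_erase hcB hb]; exact B.2
  set A' : Committee m k := ⟨insert c' (B.1.erase b), hA'card⟩ with hA'
  have hcA' : c' ∈ A'.1 := by simp [hA']
  rw [Gscore_eq f z0 A A' c c' (by simp [hcA, hcA'])]
  unfold Gscore
  have hterm : ∀ w ∈ Finset.univ.filter (fun w : Equiv.Perm (Fin m) => w c' = z0),
      f (commPos w B) ≤ f (commPos w A') := by
    intro w hw
    rw [Finset.mem_filter] at hw
    apply hf.mono
    have him : (commPos w A').1 = insert z0 ((B.1.image w).erase (w b)) := by
      show (insert c' (B.1.erase b)).image w = _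
      rw [Finset.image_insert, Finset.image_erase w.injective, hw.2]
    show Dominates (commPos w A').1 (commPos w B).1
    rw [him]
    refine dom_insert_bot _ _ _ ?_ hz0 (Finset.mem_image_of_mem w hb)
    intro hcon
    rw [Finset.mem_image] at hcon
    obtain ⟨x, hx, hxe⟩ := hcon
    have : x = c' := w.injective (hxe.trans hw.2.symm)
    exact hcB (this ▸ hx)
  obtain ⟨σ₁, hσ₁b, hσ₁B⟩ := exists_perm_image_pt B.1 D.1 (B.2.trans D.2.symm) b d
    (by simp [hb, hd])
  set c₁ := σ₁ c' with hc₁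
  have hc₁D : c₁ ∉ D.1 := by
    rw [← hσ₁B]
    intro hcon
    rw [Finset.mem_image] at hcon
    obtain ⟨x, hx, hxe⟩ := hcon
    exact hcB (σ₁.injective hxe ▸ hx)
  set τ := Equiv.swap c₁ z0 with hτ
  set σ := σ₁.trans τ with hσ
  have hσc' : σ c' = z0 := by
    show τ (σ₁ c') = z0
    rw [← hc₁, hτ]; exact Equiv.swap_apply_left c₁ z0
  have hτfix : ∀ x ∈ D.1, τ x = x := by
    intro x hx
    refine Equiv.swap_apply_of_ne_of_ne ?_ ?_
    · exact fun h => hc₁D (h ▸ hx)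
    · exact fun h => hzD (h ▸ hx)
  have hσB : B.1.image σ = D.1 := by
    have : B.1.image σ = (B.1.image σ₁).image τ := by
      rw [Finset.image_image]; rfl
    rw [this, hσ₁B]
    apply Finset.image_congr (g := id) (fun x hx => hτfix x hx) |>.trans (Finset.image_id)
  have hσb : σ b = d := by
    show τ (σ₁ b) = d
    rw [hσ₁b]
    exact hτfix d hd
  have hσA' : (commPos σ A').1 = insert z0 (D.1.erase d) := by
    show (insert c' (B.1.erase b)).image σ = _
    rw [Finset.image_insert, Finset.image_erase σ.injective, hσc', hσB, hσb]
  have hwitness : f (commPos σ B) < f (commPos σ A') := by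
    have : f (commPos σ B) = f D := by
      congr 1
      exact Subtype.ext hσB
    rw [this]
    exact hstrict (commPos σ A') hσA'
  exact Finset.sum_lt_sum hterm ⟨σ, by simp [hσc'], hwitness⟩

private lemma score_eq_sum {m k : ℕ} (f : Committee m k → ℝ) (z0 : Fin m)
    (S : Finset (Fin m)) (E : Election m)
    (hE : ∀ w : Equiv.Perm (Fin m),
      (Finset.univ.filter (fun i : Fin E.n => E.vote i = w)).card =
        if w.symm z0 ∈ S then 1 else 0)
    (W : Committee m k) :
    score f E W = ∑ c ∈ S, Gscore f z0 W c := by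
  have step1 : score f E W =
      ∑ w : Equiv.Perm (Fin m), ∑ i ∈ Finset.univ.filter (fun i : Fin E.n => E.vote i = w),
        f (commPos (E.vote i) W) := by
    rw [score]
    exact (Finset.sum_fiberwise Finset.univ E.vote (fun i => f (commPos (E.vote i) W))).symm
  have step2 : ∀ w : Equiv.Perm (Fin m),
      (∑ i ∈ Finset.univ.filter (fun i : Fin E.n => E.vote i = w),
        f (commPos (E.vote i) W)) =
      (if w.symm z0 ∈ S then 1 else 0 : ℕ) • f (commPos w W) := by
    intro w
    rw [← hE w]
    have hcg : ∀ i ∈ Finset.univ.filter (fun i : Fin E.n => E.vote i = w),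
        f (commPos (E.vote i) W) = f (commPos w W) := by
      intro i hi
      rw [Finset.mem_filter] at hi
      rw [hi.2]
    rw [Finset.sum_congr rfl hcg, Finset.sum_const]
  rw [step1, Finset.sum_congr rfl (fun w _ => step2 w)]
  have step3 : (∑ w : Equiv.Perm (Fin m), (if w.symm z0 ∈ S then 1 else 0 : ℕ) • f (commPos w W))
      = ∑ w ∈ Finset.univ.filter (fun w : Equiv.Perm (Fin m) => w.symm z0 ∈ S),
          f (commPos w W) := by
    rw [Finset.sum_filter]
    refine Finset.sum_congr rfl (fun w _ => ?_)
    by_cases h : w.symm z0 ∈ S <;> simp [h]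
  rw [step3]
  rw [← Finset.sum_fiberwise (Finset.univ.filter (fun w : Equiv.Perm (Fin m) => w.symm z0 ∈ S))
    (fun w => w.symm z0) (fun w => f (commPos w W))]
  rw [← Finset.sum_filter_add_sum_filter_not Finset.univ (fun c => c ∈ S)
    (fun c => ∑ w ∈ (Finset.univ.filter (fun w : Equiv.Perm (Fin m) => w.symm z0 ∈ S)).filter
      (fun w => w.symm z0 = c), f (commPos w W))]
  have hzero : ∑ c ∈ Finset.univ.filter (fun c : Fin m => ¬ c ∈ S),
      (∑ w ∈ (Finset.univ.filter (fun w : Equiv.Perm (Fin m) => w.symm z0 ∈ S)).filter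
        (fun w => w.symm z0 = c), f (commPos w W)) = 0 := by
    refine Finset.sum_eq_zero (fun c hc => ?_)
    rw [Finset.mem_filter] at hc
    refine Finset.sum_eq_zero (fun w hw => ?_)
    exfalso
    rw [Finset.filter_filter, Finset.mem_filter] at hw
    exact hc.2 (hw.2.2 ▸ hw.2.1)
  rw [hzero, add_zero]
  rw [Finset.filter_univ_mem]
  refine Finset.sum_congr rfl (fun c hc => ?_)
  rw [Gscore]
  refine Finset.sum_congr ?_ (fun _ _ => rfl)
  rw [Finset.filter_filter]
  ext w
  simp only [Finset.mem_filter, Finset.mem_univ, true_and]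
  constructor
  · rintro ⟨_, h⟩
    rw [← h]; exact (Equiv.apply_symm_apply w z0)
  · intro h
    have : w.symm z0 = c := by rw [← h, Equiv.symm_apply_apply]
    exact ⟨this ▸ hc, this⟩

end ZetaSetAux

/-- in the election `ζ(S)` (concatenation of `ζ(c)` for `c ∈ S`,
i.e. exactly one voter for each ranking whose top candidate lies in `S`), under
a nontrivial committee scoring function: if `|S| ≥ k` the winning committees are
exactly the size-`k` subsets of `S`; if `|S| < k` they are exactly the size-`k`
committees containing `S`. -/

theorem zeta_set_winners
    (m k : ℕ) (hk : 0 < k) (hkm : k ≤ m)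
    (f : Committee m k → ℝ) (hf : IsCSF f) (hnc : NonConstant f)
    (S : Finset (Fin m)) (E : Election m)
    (hE : ∀ w : Equiv.Perm (Fin m),
      (Finset.univ.filter (fun i : Fin E.n => E.vote i = w)).card =
        if w.symm ⟨0, by omega⟩ ∈ S then 1 else 0) :
    (k ≤ S.card → ∀ W : Committee m k, W ∈ winners f E ↔ W.1 ⊆ S) ∧
    (S.card < k → ∀ W : Committee m k, W ∈ winners f E ↔ S ⊆ W.1) := by
    classical
  have hm0 : 0 < m := lt_of_lt_of_le hk hkm
  set z0 : Fin m := ⟨0, hm0⟩ with hz0def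
  have hz0 : ∀ x : Fin m, z0 ≤ x := fun x => by
    rw [hz0def]; exact Fin.mk_le_of_le_val (Nat.zero_le _)
  have hklt : k < m := k_lt_m f hnc hkm
  obtain ⟨W₀s, -, hW₀card⟩ :=
    Finset.exists_subset_card_eq (s := (Finset.univ : Finset (Fin m))) (n := k) (by simpa using hkm)
  set W₀ : Committee m k := ⟨W₀s, hW₀card⟩ with hW₀
  obtain ⟨c₀, hc₀⟩ := Finset.card_pos.mp (by rw [hW₀card]; exact hk)
  have : (W₀sᶜ).Nonempty := by
    rw [← Finset.card_pos, Finset.card_compl, hW₀card]; simp; omega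
  obtain ⟨c₁, hc₁'⟩ := this
  have hc₁ : c₁ ∉ W₀s := Finset.mem_compl.mp hc₁'
  set x := Gscore f z0 W₀ c₀ with hx
  set y := Gscore f z0 W₀ c₁ with hy
  have hxy : y < x := Gscore_lt f z0 hf hnc hz0 hk hklt W₀ W₀ c₀ c₁ hc₀ hc₁
  have hG : ∀ (W : Committee m k) (c : Fin m), Gscore f z0 W c = if c ∈ W.1 then x else y := by
    intro W c
    by_cases h : c ∈ W.1
    · rw [if_pos h, hx]; exact Gscore_eq f z0 W W₀ c c₀ (by simp [h, hc₀, hW₀])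
    · rw [if_neg h, hy]; exact Gscore_eq f z0 W W₀ c c₁ (by simp [h, hc₁, hW₀])
  have hscore : ∀ W : Committee m k,
      score f E W = ((S ∩ W.1).card : ℝ) * (x - y) + (S.card : ℝ) * y := by
    intro W
    rw [score_eq_sum f z0 S E hE W]
    rw [Finset.sum_congr rfl (fun c _ => hG W c)]
    rw [Finset.sum_ite, Finset.sum_const, Finset.sum_const, Finset.filter_mem_eq_inter]
    have h2 : (S.filter (fun c => ¬ c ∈ W.1)) = S \ W.1 := by
      ext c; simp [Finset.mem_sdiff]
    rw [h2]
    have h3 : (S ∩ W.1).card + (S \ W.1).card = S.card := Finset.card_inter_add_card_sdiff S W.1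
    have h4 : (S ∩ W.1).card ≤ S.card := Finset.card_le_card Finset.inter_subset_left
    rw [nsmul_eq_mul, nsmul_eq_mul]
    have : ((S \ W.1).card : ℝ) = (S.card : ℝ) - ((S ∩ W.1).card : ℝ) := by
      have : (S \ W.1).card = S.card - (S ∩ W.1).card := by omega
      rw [this, Nat.cast_sub h4]
    rw [this]; ring
  have hineq : ∀ W T : Committee m k,
      score f E T ≤ score f E W ↔ (S ∩ T.1).card ≤ (S ∩ W.1).card := by
    intro W T
    rw [hscore, hscore, add_le_add_iff_right,
      mul_le_mul_iff_of_pos_right (sub_pos.mpr hxy), Nat.cast_le]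
  have hwin : ∀ W : Committee m k,
      W ∈ winners f E ↔ ∀ T : Committee m k, (S ∩ T.1).card ≤ (S ∩ W.1).card := by
    intro W
    constructor
    · intro h T; exact (hineq W T).mp (h T)
    · intro h T; exact (hineq W T).mpr (h T)
  constructor
  · intro hSk W
    rw [hwin]
    constructor
    · intro h
      obtain ⟨T₀s, hT₀sub, hT₀card⟩ := Finset.exists_subset_card_eq hSk
      have hT0 := h ⟨T₀s, hT₀card⟩
      have h1 : S ∩ T₀s = T₀s := Finset.inter_eq_right.mpr hT₀sub
      have hk' : k ≤ (S ∩ W.1).card := by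
        rw [h1, hT₀card] at hT0; exact hT0
      have h3 : S ∩ W.1 = W.1 :=
        Finset.eq_of_subset_of_card_le Finset.inter_subset_right (by rw [W.2]; exact hk')
      exact Finset.inter_eq_right.mp h3
    · intro hWS T
      have hW : S ∩ W.1 = W.1 := Finset.inter_eq_right.mpr hWS
      rw [hW, W.2]
      exact le_trans (Finset.card_le_card Finset.inter_subset_right) (le_of_eq T.2)
  · intro hSk W
    rw [hwin]
    constructor
    · intro h
      obtain ⟨T₀s, hT₀sub, hT₀card⟩ :=
        Finset.exists_superset_card_eq (s := S) (n := k) (le_of_lt hSk) (by simpa using hkm)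
      have hT0 := h ⟨T₀s, hT₀card⟩
      have h1 : S ∩ T₀s = S := Finset.inter_eq_left.mpr hT₀sub
      have hS' : S.card ≤ (S ∩ W.1).card := by rw [h1] at hT0; exact hT0
      have h3 : S ∩ W.1 = S :=
        Finset.eq_of_subset_of_card_le Finset.inter_subset_left hS'
      exact Finset.inter_eq_left.mp h3
    · intro hWS T
      have hW : S ∩ W.1 = S := Finset.inter_eq_left.mpr hWS
      rw [hW]
      exact Finset.card_le_card Finset.inter_subset_left
end

section
/- If a committee scoring rule R_f is committee-enlargement monotone and its size-1 scoring function f_{m,1} is constant, then f_{m,k} is constant for every k ≤ m; i.e., if the rule is trivial for committee size 1 then it is trivial for all committee sizes. -/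
open Finset

section AuxSort

variable {m : ℕ}

lemma aux_card_filter_ge (S : Finset (Fin m)) (i : ℕ)
    (h : i < (S.sort (· ≤ ·)).length) :
    i + 1 ≤ (S.filter (· ≤ (S.sort (· ≤ ·)).get ⟨i, h⟩)).card := by
  classical
  set l := S.sort (· ≤ ·) with hl
  have hsub : (l.take (i + 1)).toFinset ⊆ S.filter (· ≤ l.get ⟨i, h⟩) := by
    intro x hx
    rw [List.mem_toFinset] at hx
    obtain ⟨jj, hj, rfl⟩ := List.mem_iff_getElem.mp hx
    have hj' : jj < l.length := lt_of_lt_of_le hj (by rw [List.length_take]; omega)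
    rw [List.getElem_take]
    rw [Finset.mem_filter]
    constructor
    · rw [← Finset.mem_sort (α := Fin m) (· ≤ ·) (s := S), ← hl]
      exact List.getElem_mem hj'
    · have hji : jj ≤ i := by
        rw [List.length_take] at hj; omega
      have := (Finset.pairwise_sort S (· ≤ ·)).rel_get_of_le
        (a := ⟨jj, by rw [← hl] at *; exact hj'⟩) (b := ⟨i, by rw [← hl] at *; exact h⟩)
        (by simpa using hji)
      simpa [hl] using this
  calc i + 1 = (l.take (i + 1)).toFinset.card := by
        rw [List.toFinset_card_of_nodup ((by rw [hl]; exact Finset.sort_nodup S _ : l.Nodup).sublist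
          (List.take_sublist _ _))]
        rw [List.length_take]; omega
    _ ≤ _ := Finset.card_le_card hsub

lemma aux_card_filter_le (S : Finset (Fin m)) (i : ℕ)
    (h : i < (S.sort (· ≤ ·)).length) (b : Fin m)
    (hb : b < (S.sort (· ≤ ·)).get ⟨i, h⟩) :
    (S.filter (· ≤ b)).card ≤ i := by
  classical
  set l := S.sort (· ≤ ·) with hl
  have hsub : S.filter (· ≤ b) ⊆ (l.take i).toFinset := by
    intro x hx
    rw [Finset.mem_filter] at hx
    have hxl : x ∈ l := by rw [hl, Finset.mem_sort]; exact hx.1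
    obtain ⟨jj, hj, hx'⟩ := List.mem_iff_getElem.mp hxl
    have hji : jj < i := by
      by_contra hc
      push_neg at hc
      have hmono := (Finset.pairwise_sort S (· ≤ ·)).rel_get_of_le
        (a := ⟨i, by rw [← hl] at *; exact h⟩) (b := ⟨jj, by rw [← hl] at *; exact hj⟩)
        (by simpa using hc)
      have : l.get ⟨i, h⟩ ≤ x := by
        rw [← hx']
        simpa [hl] using hmono
      exact absurd (le_trans this hx.2) (not_le.mpr hb)
    rw [List.mem_toFinset, ← hx']
    have hjt : jj < (l.take i).length := by rw [List.length_take]; omega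
    have : (l.take i)[jj] = l[jj] := List.getElem_take
    rw [← this]
    exact List.getElem_mem hjt
  calc (S.filter (· ≤ b)).card ≤ (l.take i).toFinset.card := Finset.card_le_card hsub
    _ ≤ (l.take i).length := (l.take i).toFinset_card_le
    _ ≤ i := by rw [List.length_take]; omega

end AuxSort
section AuxDom

variable {m : ℕ}

lemma aux_dominates_of_injOn (A B : Finset (Fin m)) (hcard : A.card = B.card)
    (e : Fin m → Fin m) (hmaps : ∀ b ∈ B, e b ∈ A) (hinj : Set.InjOn e B)
    (hle : ∀ b ∈ B, e b ≤ b) : Dominates A B := by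
  classical
  rw [Dominates, List.forall₂_iff_get]
  refine ⟨by simp [hcard], ?_⟩
  intro i h₁ h₂
  by_contra hcon
  push_neg at hcon
  set b := (B.sort (· ≤ ·)).get ⟨i, h₂⟩ with hbdef
  have c1 : i + 1 ≤ (B.filter (· ≤ b)).card := aux_card_filter_ge B i h₂
  have c2 : (B.filter (· ≤ b)).card ≤ (A.filter (· ≤ b)).card := by
    apply Finset.card_le_card_of_injOn e
    · intro x hx
      rw [Finset.mem_coe, Finset.mem_filter] at hx ⊢
      exact ⟨hmaps _ hx.1, le_trans (hle _ hx.1) hx.2⟩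
    · exact hinj.mono (fun x hx => (Finset.mem_filter.mp hx).1)
  have c3 : (A.filter (· ≤ b)).card ≤ i := aux_card_filter_le A i h₁ b hcon
  omega

lemma aux_dominates_insert (X : Finset (Fin m)) {p q : Fin m} (hp : p ∉ X) (hq : q ∉ X)
    (hpq : p ≤ q) : Dominates (insert p X) (insert q X) := by
  classical
  apply aux_dominates_of_injOn _ _
    (by rw [Finset.card_insert_of_notMem hp, Finset.card_insert_of_notMem hq])
    (fun x => if x = q then p else x)
  · intro b hb
    by_cases h : b = q
    · simp [h]
    · simp only [if_neg h]
      rcases Finset.mem_insert.mp hb with h' | h'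
      · exact absurd h' h
      · exact Finset.mem_insert_of_mem h'
  · intro x hx y hy hxy
    simp only at hxy
    by_cases h1 : x = q <;> by_cases h2 : y = q
    · rw [h1, h2]
    · rw [if_pos h1, if_neg h2] at hxy
      rcases Finset.mem_insert.mp hy with h' | h'
      · exact absurd h' h2
      · exact absurd (hxy ▸ h') hp
    · rw [if_neg h1, if_pos h2] at hxy
      rcases Finset.mem_insert.mp hx with h' | h'
      · exact absurd h' h1
      · exact absurd (hxy ▸ h') hp
    · rwa [if_neg h1, if_neg h2] at hxy
  · intro b hb
    by_cases h : b = q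
    · rw [if_pos h, h]; exact hpq
    · rw [if_neg h]

end AuxDom
section AuxConnect

variable {α : Type*} [DecidableEq α] {k : ℕ}

lemma aux_connect_step1 (lastc : α) (F : Finset α → ℝ)
    (H : ∀ I : Finset α, I.card = k → lastc ∉ I → ∀ j, j ∉ I → j ≠ lastc →
      F (insert j I) = F (insert lastc I)) :
    ∀ (n : ℕ) (I I' : Finset α), (I \ I').card ≤ n → I.card = k → I'.card = k →
      lastc ∉ I → lastc ∉ I' → F (insert lastc I) = F (insert lastc I') := by
  intro n
  induction n with
  | zero =>
    intro I I' hn hI hI' _ _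
    have h0 : I \ I' = ∅ := Finset.card_eq_zero.mp (Nat.le_zero.mp hn)
    have hsub : I ⊆ I' := Finset.sdiff_eq_empty_iff_subset.mp h0
    rw [Finset.eq_of_subset_of_card_le hsub (by omega)]
  | succ n ih =>
    intro I I' hn hI hI' hlI hlI'
    by_cases heq : I = I'
    · rw [heq]
    · have hne1 : (I \ I').Nonempty := by
        rw [Finset.nonempty_iff_ne_empty]
        intro h
        exact heq (Finset.eq_of_subset_of_card_le (Finset.sdiff_eq_empty_iff_subset.mp h)
          (by omega))
      have hne2 : (I' \ I).Nonempty := by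
        rw [Finset.nonempty_iff_ne_empty]
        intro h
        exact heq (Finset.eq_of_subset_of_card_le (Finset.sdiff_eq_empty_iff_subset.mp h)
          (by omega)).symm
      obtain ⟨a, ha⟩ := hne1
      obtain ⟨b, hb⟩ := hne2
      rw [Finset.mem_sdiff] at ha hb
      have hab : a ≠ b := fun h => hb.2 (h ▸ ha.1)
      have hbla : b ∉ I.erase a := fun h => hb.2 (Finset.mem_of_mem_erase h)
      have hkpos : 0 < k := by rw [← hI]; exact Finset.card_pos.mpr ⟨a, ha.1⟩
      set I'' : Finset α := insert b (I.erase a) with hI''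
      have hI''card : I''.card = k := by
        rw [hI'', Finset.card_insert_of_notMem hbla, Finset.card_erase_of_mem ha.1, hI]
        omega
      have hlI'' : lastc ∉ I'' := by
        rw [hI'']
        intro h
        rcases Finset.mem_insert.mp h with h' | h'
        · exact hlI' (h' ▸ hb.1)
        · exact hlI (Finset.mem_of_mem_erase h')
      have e1 : F (insert b I) = F (insert lastc I) :=
        H I hI hlI b hb.2 (fun h => hlI' (h ▸ hb.1))
      have e2 : insert b I = insert a I'' := by
        rw [hI'']
        conv_lhs => rw [← Finset.insert_erase ha.1]
        ext x; simp only [Finset.mem_insert]; tauto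
      have haI'' : a ∉ I'' := by
        rw [hI'']
        intro h
        rcases Finset.mem_insert.mp h with h' | h'
        · exact hab h'
        · exact Finset.notMem_erase a I h'
      have e3 : F (insert a I'') = F (insert lastc I'') :=
        H I'' hI''card hlI'' a haI'' (fun h => hlI (h ▸ ha.1))
      have hsd : I'' \ I' = (I \ I').erase a := by
        ext x
        simp only [hI'', Finset.mem_sdiff, Finset.mem_erase, Finset.mem_insert]
        have hxb : x = b → x ∈ I' := fun h => h ▸ hb.1
        tauto
      have hc : (I'' \ I').card ≤ n := by
        have hpos : 0 < (I \ I').card := Finset.card_pos.mpr ⟨a, Finset.mem_sdiff.mpr ha⟩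
        rw [hsd, Finset.card_erase_of_mem (Finset.mem_sdiff.mpr ha)]
        omega
      calc F (insert lastc I) = F (insert b I) := e1.symm
        _ = F (insert a I'') := by rw [e2]
        _ = F (insert lastc I'') := e3
        _ = F (insert lastc I') := ih I'' I' hc hI''card hI' hlI'' hlI'

lemma aux_connect (lastc : α) (F : Finset α → ℝ)
    (H : ∀ I : Finset α, I.card = k → lastc ∉ I → ∀ j, j ∉ I → j ≠ lastc →
      F (insert j I) = F (insert lastc I))
    (S T : Finset α) (hS : S.card = k + 1) (hT : T.card = k + 1) : F S = F T := by
  have key : ∀ U : Finset α, U.card = k + 1 →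
      ∃ I, I.card = k ∧ lastc ∉ I ∧ F U = F (insert lastc I) := by
    intro U hU
    by_cases hl : lastc ∈ U
    · refine ⟨U.erase lastc, ?_, Finset.notMem_erase _ _, ?_⟩
      · rw [Finset.card_erase_of_mem hl, hU]; omega
      · rw [Finset.insert_erase hl]
    · have hUne : U.Nonempty := Finset.card_pos.mp (by omega)
      obtain ⟨a, ha⟩ := hUne
      have hcae : (U.erase a).card = k := by rw [Finset.card_erase_of_mem ha, hU]; omega
      have hlae : lastc ∉ U.erase a := fun h => hl (Finset.mem_of_mem_erase h)
      refine ⟨U.erase a, hcae, hlae, ?_⟩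
      rw [← H (U.erase a) hcae hlae a (Finset.notMem_erase _ _) (fun h => hl (h ▸ ha)),
        Finset.insert_erase ha]
  obtain ⟨I, hI, hlI, hFS⟩ := key S hS
  obtain ⟨I', hI', hlI', hFT⟩ := key T hT
  rw [hFS, hFT]
  exact aux_connect_step1 lastc F H (I \ I').card I I' le_rfl hI hI' hlI hlI'

end AuxConnect
section AuxPerm

variable {m : ℕ}

lemma aux_exists_perm_maps (P Q : Finset (Fin m)) (h : P.card = Q.card) :
    ∃ v : Equiv.Perm (Fin m), ∀ x ∈ P, v x ∈ Q := by
  classical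
  have e : {x : Fin m // x ∈ P} ≃ {x : Fin m // x ∈ Q} := Finset.equivOfCardEq h
  have hcompl : Fintype.card {x : Fin m // ¬ x ∈ P} = Fintype.card {x : Fin m // ¬ x ∈ Q} := by
    rw [Fintype.card_subtype_compl, Fintype.card_subtype_compl]
    congr 1
    rw [show Fintype.card {x : Fin m // x ∈ P} = P.card from Fintype.card_coe P,
      show Fintype.card {x : Fin m // x ∈ Q} = Q.card from Fintype.card_coe Q, h]
  let g := Fintype.equivOfCardEq hcompl
  refine ⟨Equiv.subtypeCongr e g, fun x hx => ?_⟩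
  have : Equiv.subtypeCongr e g x = (e ⟨x, hx⟩ : {x : Fin m // x ∈ Q}).1 := by
    simp [Equiv.subtypeCongr, hx]
  rw [this]
  exact (e ⟨x, hx⟩).2

lemma aux_exists_voter (lastc c d : Fin m) (S I : Finset (Fin m)) (j : Fin m)
    (hcS : c ∉ S) (hdS : d ∉ S) (hdc : d ≠ c) (hcard : S.card = I.card)
    (hlI : lastc ∉ I) (hjI : j ∉ I) (hjl : j ≠ lastc) :
    ∃ v : Equiv.Perm (Fin m), v c = lastc ∧ v d = j ∧ S.image v = I := by
  classical
  obtain ⟨v₀, hv₀⟩ := aux_exists_perm_maps S I hcard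
  have him0 : S.image v₀ = I := by
    apply Finset.eq_of_subset_of_card_le
    · intro x hx
      obtain ⟨y, hy, rfl⟩ := Finset.mem_image.mp hx
      exact hv₀ y hy
    · rw [Finset.card_image_of_injective _ v₀.injective, ← hcard]
  set v₁ := v₀.trans (Equiv.swap (v₀ c) lastc) with hv₁def
  have hv₁c : v₁ c = lastc := by simp [hv₁def]
  have hv₁S : ∀ x ∈ S, v₁ x = v₀ x := by
    intro x hx
    have h1 : v₀ x ≠ v₀ c := fun hh => hcS (v₀.injective hh ▸ hx)
    have h2 : v₀ x ≠ lastc := fun hh => hlI (hh ▸ (him0 ▸ Finset.mem_image_of_mem v₀ hx))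
    simp [hv₁def, Equiv.swap_apply_of_ne_of_ne h1 h2]
  have him1 : S.image v₁ = I := by
    rw [← him0]
    exact Finset.image_congr (fun x hx => hv₁S x hx)
  set v₂ := v₁.trans (Equiv.swap (v₁ d) j) with hv₂def
  have hv₂d : v₂ d = j := by simp [hv₂def]
  have hldne : lastc ≠ v₁ d := by
    rw [← hv₁c]
    exact fun hh => hdc (v₁.injective hh.symm)
  have hv₂c : v₂ c = lastc := by
    simp only [hv₂def, Equiv.trans_apply, hv₁c]
    exact Equiv.swap_apply_of_ne_of_ne hldne hjl.symm
  have hv₂S : ∀ x ∈ S, v₂ x = v₁ x := by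
    intro x hx
    have hmem : v₁ x ∈ I := him1 ▸ Finset.mem_image_of_mem v₁ hx
    have h1 : v₁ x ≠ v₁ d := fun hh => hdS (v₁.injective hh ▸ hx)
    have h2 : v₁ x ≠ j := fun hh => hjI (hh ▸ hmem)
    simp [hv₂def, Equiv.swap_apply_of_ne_of_ne h1 h2]
  refine ⟨v₂, hv₂c, hv₂d, ?_⟩
  rw [← him1]
  exact Finset.image_congr (fun x hx => hv₂S x hx)

end AuxPerm
section AuxVoter

lemma aux_pervoter {m k : ℕ} (g : Committee m (k + 1) → ℝ) (hg : IsCSF g)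
    (lastc : Fin m) (hmax : ∀ x : Fin m, x ≤ lastc)
    (W : Committee m (k + 1)) (hcW : lastc ∈ W.1) (d : Fin m) (hd : d ∉ W.1)
    (hT : (insert d (W.1.erase lastc)).card = k + 1)
    (v : Equiv.Perm (Fin m)) (hv : v lastc = lastc) :
    g (commPos v W) ≤ g (commPos v ⟨insert d (W.1.erase lastc), hT⟩) := by
  classical
  set J : Finset (Fin m) := (W.1.erase lastc).image v with hJ
  have h1 : (commPos v W).1 = insert lastc J := by
    show W.1.image v = _
    conv_lhs => rw [← Finset.insert_erase hcW]
    rw [Finset.image_insert, hv]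
  have h2 : (commPos v ⟨insert d (W.1.erase lastc), hT⟩).1 = insert (v d) J := by
    show (insert d (W.1.erase lastc)).image v = _
    rw [Finset.image_insert]
  have hvdJ : v d ∉ J := by
    intro hh
    obtain ⟨x, hx, hxe⟩ := Finset.mem_image.mp hh
    exact hd (v.injective hxe ▸ Finset.mem_of_mem_erase hx)
  have hlJ : lastc ∉ J := by
    intro hh
    obtain ⟨x, hx, hxe⟩ := Finset.mem_image.mp hh
    rw [← hv] at hxe
    exact Finset.notMem_erase lastc W.1 (v.injective hxe ▸ hx)
  apply hg.mono
  rw [h1, h2]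
  exact aux_dominates_insert J hvdJ hlJ (hmax (v d))

end AuxVoter
/-- if a committee-enlargement monotone committee scoring rule has
a constant scoring function for committee size 1 (for `m` candidates), then its
scoring function is constant for every committee size `k ≤ m`. -/
theorem cem_trivial_for_one_implies_trivial
    (f : ∀ m k, Committee m k → ℝ) (hf : ∀ m k, IsCSF (f m k))
    (hcem : CEM f) (m : ℕ)
    (h1 : ∀ S T : Committee m 1, f m 1 S = f m 1 T) :
    ∀ k, k ≤ m → ∀ S T : Committee m k, f m k S = f m k T := by
  classical
  intro k
  induction k with
  | zero =>
    intro _ S T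
    have hS : S.1 = ∅ := Finset.card_eq_zero.mp S.2
    have hT : T.1 = ∅ := Finset.card_eq_zero.mp T.2
    have : S = T := Subtype.ext (hS.trans hT.symm)
    rw [this]
  | succ k ih =>
    intro hk
    rcases Nat.eq_zero_or_pos k with rfl | hkpos
    · exact h1
    by_cases hkm : k + 1 = m
    · intro S T
      have hS : S.1 = Finset.univ :=
        Finset.eq_univ_of_card _ (by rw [S.2, hkm, Fintype.card_fin])
      have hT : T.1 = Finset.univ :=
        Finset.eq_univ_of_card _ (by rw [T.2, hkm, Fintype.card_fin])
      have : S = T := Subtype.ext (hS.trans hT.symm)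
      rw [this]
    · have hklt : k + 1 < m := lt_of_le_of_ne hk hkm
      have hconst : ∀ S T : Committee m k, f m k S = f m k T := ih (by omega)
      by_contra hnc
      push_neg at hnc
      obtain ⟨S₀, T₀, hST⟩ := hnc
      -- setup
      have hm1 : 0 < m := by omega
      set lastc : Fin m := ⟨m - 1, by omega⟩ with hlastc
      have hmax : ∀ x : Fin m, x ≤ lastc := by
        intro x
        rw [Fin.le_def]
        have := x.2
        simp only [hlastc]
        omega
      set F : Finset (Fin m) → ℝ :=
        fun A => if hA : A.card = k + 1 then f m (k + 1) ⟨A, hA⟩ else 0 with hF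
      -- the strict pair
      have hpair : ∃ I : Finset (Fin m), I.card = k ∧ lastc ∉ I ∧
          ∃ j, j ∉ I ∧ j ≠ lastc ∧ F (insert j I) ≠ F (insert lastc I) := by
        by_contra hcon
        push_neg at hcon
        have hcall := aux_connect lastc F
          (fun I hI hlI j hjI hjl => hcon I hI hlI j hjI hjl) S₀.1 T₀.1 S₀.2 T₀.2
        apply hST
        have e1 : F S₀.1 = f m (k + 1) S₀ := by
          rw [hF]; simp only [dif_pos S₀.2]
        have e2 : F T₀.1 = f m (k + 1) T₀ := by
          rw [hF]; simp only [dif_pos T₀.2]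
        rw [← e1, ← e2, hcall]
      obtain ⟨I, hIcard, hlI, j, hjI, hjlast, hne⟩ := hpair
      have hjc : (insert j I).card = k + 1 := by
        rw [Finset.card_insert_of_notMem hjI, hIcard]
      have hlc : (insert lastc I).card = k + 1 := by
        rw [Finset.card_insert_of_notMem hlI, hIcard]
      have hgt : F (insert lastc I) < F (insert j I) := by
        have hmono := (hf m (k + 1)).mono ⟨insert j I, hjc⟩ ⟨insert lastc I, hlc⟩
          (aux_dominates_insert I hjI hlI (hmax j))
        have hle : F (insert lastc I) ≤ F (insert j I) := by
          rw [hF]; simp only [dif_pos hjc, dif_pos hlc]; exact hmono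
        exact lt_of_le_of_ne hle (Ne.symm hne)
      -- the election
      set Sub := {v : Equiv.Perm (Fin m) // v lastc = lastc} with hSub
      set eqv : Fin (Fintype.card Sub) ≃ Sub := (Fintype.equivFin Sub).symm with heqv
      set E : Election m := ⟨Fintype.card Sub, fun i => (eqv i).1⟩ with hE
      -- Claim A: winners of size k+1 avoid lastc
      have claimA : ∀ W' : Committee m (k + 1),
          W' ∈ winners (f m (k + 1)) E → lastc ∉ W'.1 := by
        intro W' hW' hcW
        have hdex : ∃ d, d ∉ W'.1 := by
          by_contra hcon
          push_neg at hcon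
          have huniv : W'.1 = Finset.univ := Finset.eq_univ_iff_forall.mpr hcon
          have hc2 := W'.2
          rw [huniv, Finset.card_univ, Fintype.card_fin] at hc2
          omega
        obtain ⟨d, hd⟩ := hdex
        have hdl : d ≠ lastc := fun h => hd (h ▸ hcW)
        have hdE : d ∉ W'.1.erase lastc := fun h => hd (Finset.mem_of_mem_erase h)
        have hTcard : (insert d (W'.1.erase lastc)).card = k + 1 := by
          rw [Finset.card_insert_of_notMem hdE, Finset.card_erase_of_mem hcW, W'.2]; omega
        set T : Committee m (k + 1) := ⟨insert d (W'.1.erase lastc), hTcard⟩ with hT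
        have hlt : score (f m (k + 1)) E W' < score (f m (k + 1)) E T := by
          apply Finset.sum_lt_sum
          · intro i _
            exact aux_pervoter (f m (k + 1)) (hf m (k + 1)) lastc hmax W' hcW d hd hTcard
              ((eqv i).1) (eqv i).2
          · obtain ⟨v, hvc, hvd, hvim⟩ := aux_exists_voter lastc lastc d
              (W'.1.erase lastc) I j (Finset.notMem_erase _ _) hdE hdl
              (by rw [Finset.card_erase_of_mem hcW, W'.2, hIcard]; omega)
              hlI hjI hjlast
            refine ⟨eqv.symm ⟨v, hvc⟩, Finset.mem_univ _, ?_⟩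
            have hv : E.vote (eqv.symm ⟨v, hvc⟩) = v := by
              show (eqv (eqv.symm ⟨v, hvc⟩)).1 = v
              rw [Equiv.apply_symm_apply]
            rw [hv]
            have h1 : (commPos v W').1 = insert lastc I := by
              show W'.1.image v = _
              conv_lhs => rw [← Finset.insert_erase hcW]
              rw [Finset.image_insert, hvc, hvim]
            have h2 : (commPos v T).1 = insert j I := by
              show (insert d (W'.1.erase lastc)).image v = _
              rw [Finset.image_insert, hvd, hvim]
            have e1 : f m (k + 1) (commPos v W') = F (insert lastc I) := by
              have : commPos v W' = ⟨insert lastc I, hlc⟩ := Subtype.ext h1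
              rw [this, hF]; simp only [dif_pos hlc]
            have e2 : f m (k + 1) (commPos v T) = F (insert j I) := by
              have : commPos v T = ⟨insert j I, hjc⟩ := Subtype.ext h2
              rw [this, hF]; simp only [dif_pos hjc]
            rw [e1, e2]
            exact hgt
        exact absurd (hW' T) (not_le.mpr hlt)
      -- Claim B: CEM contradiction
      obtain ⟨B0, hB0sub, hB0card⟩ := Finset.exists_subset_card_eq
        (s := Finset.univ.erase lastc) (n := k - 1)
        (by rw [Finset.card_erase_of_mem (Finset.mem_univ _), Finset.card_univ,
            Fintype.card_fin]; omega)
      have hlB0 : lastc ∉ B0 := fun h => Finset.notMem_erase lastc _ (hB0sub h)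
      have hWcard : (insert lastc B0).card = k := by
        rw [Finset.card_insert_of_notMem hlB0, hB0card]; omega
      set W : Committee m k := ⟨insert lastc B0, hWcard⟩ with hW
      have hWwin : W ∈ winners (f m k) E := by
        intro T'
        exact le_of_eq (Finset.sum_congr rfl fun i _ => hconst _ _)
      obtain ⟨W', hW'win, hWW'⟩ := (hcem m k E hk).1 W hWwin
      exact claimA W' hW'win (hWW' (Finset.mem_insert_self _ _))
end
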